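/- arXiv:2302.11667 — 6 statements merged into one kernel-verified Lean document; each statement's English description precedes it below -/
import Mathlib

section
/- Let G be a cubic graph, M a perfect matching cut of G, and let C₁, C₂ be two vertex-disjoint induced 4-vertex cycles of G such that some edge of G joins a vertex of C₁ to a vertex of C₂. Then M contains an edge of C₁ if and only if M contains an edge of C₂. -/
open SimpleGraph

private lemma pmc_hlpA (p q : Prop) : (p ↔ ¬q) ↔ ¬(p ↔ q) := by tauto

private lemma pmc_hlpB (p q r s : Prop) (h : ¬((p ↔ q) ∧ (q ↔ r) ∧ (r ↔ s))) :
    (p ↔ ¬q) ∨ (q ↔ ¬r) ∨ (r ↔ ¬s) := by tauto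

set_option maxHeartbeats 1000000 in
/-- two vertex-disjoint induced 4-cycles joined by an edge in a cubic
graph with a perfect matching cut `M`: one contains an edge of `M` iff the other does. -/
theorem pmc_four_cycle_propagation {V : Type*} [Fintype V] [DecidableEq V]
    (G : SimpleGraph V) [DecidableRel G.Adj] (M : Finset (Sym2 V))
    (hcubic : ∀ v : V, G.degree v = 3)
    (hM : ∀ e ∈ M, e ∈ G.edgeSet)
    (hPM : ∀ v : V, ∃! e, e ∈ M ∧ v ∈ e)
    (hcut : ∃ A : Set V, ∀ u v : V, G.Adj u v → (s(u, v) ∈ M ↔ ((u ∈ A) ↔ v ∉ A)))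
    (a b c d a' b' c' d' : V)
    (hdist : [a, b, c, d, a', b', c', d'].Nodup)
    (hab : G.Adj a b) (hbc : G.Adj b c) (hcd : G.Adj c d) (hda : G.Adj d a)
    (hac : ¬ G.Adj a c) (hbd : ¬ G.Adj b d)
    (hab' : G.Adj a' b') (hbc' : G.Adj b' c') (hcd' : G.Adj c' d') (hda' : G.Adj d' a')
    (hac' : ¬ G.Adj a' c') (hbd' : ¬ G.Adj b' d')
    (hjoin : ∃ x y : V, x ∈ ({a, b, c, d} : Set V) ∧ y ∈ ({a', b', c', d'} : Set V) ∧
      G.Adj x y) :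
    (({s(a,b), s(b,c), s(c,d), s(d,a)} : Finset (Sym2 V)) ∩ M).Nonempty ↔
      (({s(a',b'), s(b',c'), s(c',d'), s(d',a')} : Finset (Sym2 V)) ∩ M).Nonempty := by
  classical
  obtain ⟨A, hA⟩ := hcut
  simp only [List.nodup_cons, List.mem_cons, List.not_mem_nil, or_false, List.nodup_nil,
    and_true, not_or] at hdist
  obtain ⟨⟨hab1, hac1, had1, haa', hab'1, hac'1, had'1⟩,
    ⟨hbc1, hbd1, hba', hbb', hbc'1, hbd'1⟩,
    ⟨hcd1, hca', hcb', hcc', hcd'1⟩,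
    ⟨hda'1, hdb', hdc', hdd'⟩,
    ⟨ha'b'1, ha'c'1, ha'd'1⟩, ⟨hb'c'1, hb'd'1⟩, hc'd'1⟩ := hdist
  -- uniqueness of matching edge at a vertex
  have huniq : ∀ e ∈ M, ∀ f ∈ M, ∀ v : V, v ∈ e → v ∈ f → e = f := by
    intro e he f hf v hve hvf
    obtain ⟨g, -, hun⟩ := hPM v
    rw [hun e ⟨he, hve⟩, hun f ⟨hf, hvf⟩]
  -- neighbors of a vertex in a cubic graph
  have hnbr : ∀ x n1 n2 n3 : V, G.Adj x n1 → G.Adj x n2 → G.Adj x n3 →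
      n1 ≠ n2 → n1 ≠ n3 → n2 ≠ n3 → ∀ w, G.Adj x w → w = n1 ∨ w = n2 ∨ w = n3 := by
    intro x n1 n2 n3 h1 h2 h3 d12 d13 d23 w hw
    have hsub : ({n1, n2, n3} : Finset V) ⊆ G.neighborFinset x := by
      intro z hz
      simp only [Finset.mem_insert, Finset.mem_singleton] at hz
      rcases hz with rfl | rfl | rfl <;> simpa [SimpleGraph.mem_neighborFinset]
    have hcard : ({n1, n2, n3} : Finset V).card = 3 := by
      rw [Finset.card_insert_of_notMem (by simp [d12, d13]),
        Finset.card_insert_of_notMem (by simp [d23]), Finset.card_singleton]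
    have hle : (G.neighborFinset x).card ≤ ({n1, n2, n3} : Finset V).card := by
      rw [hcard, SimpleGraph.card_neighborFinset_eq_degree, hcubic]
    have heq := Finset.eq_of_subset_of_card_le hsub hle
    have hwm : w ∈ ({n1, n2, n3} : Finset V) := by
      rw [heq]; simpa [SimpleGraph.mem_neighborFinset]
    simpa using hwm
  -- every vertex has a matching edge to some neighbor
  have hmatch : ∀ v : V, ∃ w, G.Adj v w ∧ s(v, w) ∈ M := by
    intro v
    obtain ⟨e, ⟨heM, hve⟩, -⟩ := hPM v
    obtain ⟨w, rfl⟩ := Sym2.mem_iff_exists.mp hve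
    exact ⟨w, (G.mem_edgeSet).mp (hM _ heM), heM⟩
  -- step 1: if both cycle edges at x do not cross, the pendant edge of x is in M
  have step1 : ∀ x n1 n2 y : V, G.Adj x n1 → G.Adj x n2 → G.Adj x y →
      n1 ≠ n2 → y ≠ n1 → y ≠ n2 → (x ∈ A ↔ n1 ∈ A) → (x ∈ A ↔ n2 ∈ A) →
      s(x, y) ∈ M := by
    intro x n1 n2 y h1 h2 hy d12 dy1 dy2 hs1 hs2
    obtain ⟨w, hw, hwM⟩ := hmatch x
    rcases hnbr x n1 n2 y h1 h2 hy d12 (fun h => dy1 h.symm) (fun h => dy2 h.symm) w hw with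
      rfl | rfl | rfl
    · exact absurd hs1 ((pmc_hlpA _ _).mp ((hA x w h1).mp hwM))
    · exact absurd hs2 ((pmc_hlpA _ _).mp ((hA x w h2).mp hwM))
    · exact hwM
  -- step 2: if the pendant edge of y is in M, the whole cycle of y is on one side
  have step2 : ∀ y n1 n2 opp x : V, G.Adj y n1 → G.Adj y n2 →
      G.Adj n1 opp → G.Adj n2 opp → x ≠ n1 → x ≠ n2 → n1 ≠ n2 →
      s(x, y) ∈ M →
      ((y ∈ A ↔ n1 ∈ A) ∧ (y ∈ A ↔ n2 ∈ A) ∧ (y ∈ A ↔ opp ∈ A)) := by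
    intro y n1 n2 opp x hyn1 hyn2 hn1o hn2o dx1 dx2 d12 hxyM
    have hnm : ∀ n : V, G.Adj y n → x ≠ n → s(y, n) ∉ M := by
      intro n hyn dxn h
      have heq := huniq _ h _ hxyM y (by simp) (by simp)
      rw [Sym2.eq_iff] at heq
      rcases heq with ⟨-, h2⟩ | ⟨-, h2⟩
      · exact hyn.ne' h2
      · exact dxn h2.symm
    have h1 : y ∈ A ↔ n1 ∈ A := by
      have h := (hA y n1 hyn1).not.mp (hnm n1 hyn1 dx1)
      rw [pmc_hlpA] at h
      exact not_not.mp h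
    have h2 : y ∈ A ↔ n2 ∈ A := by
      have h := (hA y n2 hyn2).not.mp (hnm n2 hyn2 dx2)
      rw [pmc_hlpA] at h
      exact not_not.mp h
    refine ⟨h1, h2, ?_⟩
    by_contra hopp
    have e1 : s(n1, opp) ∈ M :=
      (hA n1 opp hn1o).mpr ((pmc_hlpA _ _).mpr fun h => hopp (h1.trans h))
    have e2 : s(n2, opp) ∈ M :=
      (hA n2 opp hn2o).mpr ((pmc_hlpA _ _).mpr fun h => hopp (h2.trans h))
    have heq := huniq _ e1 _ e2 opp (by simp) (by simp)
    rw [Sym2.eq_iff] at heq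
    rcases heq with ⟨h3, -⟩ | ⟨h3, h4⟩
    · exact d12 h3
    · exact d12 (h3.trans h4)
  -- cross-distinctness
  have hcross : ∀ x ∈ ({a, b, c, d} : Set V), ∀ z ∈ ({a', b', c', d'} : Set V), x ≠ z := by
    simp only [Set.mem_insert_iff, Set.mem_singleton_iff]
    rintro x (rfl | rfl | rfl | rfl) z (rfl | rfl | rfl | rfl) <;> assumption
  obtain ⟨x, y, hx, hy, hxy⟩ := hjoin
  have hyb : y ≠ b := (hcross b (by simp) y hy).symm
  have hya : y ≠ a := (hcross a (by simp) y hy).symm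
  have hyc : y ≠ c := (hcross c (by simp) y hy).symm
  have hyd : y ≠ d := (hcross d (by simp) y hy).symm
  have hxa' : x ≠ a' := hcross x hx a' (by simp)
  have hxb' : x ≠ b' := hcross x hx b' (by simp)
  have hxc' : x ≠ c' := hcross x hx c' (by simp)
  have hxd' : x ≠ d' := hcross x hx d' (by simp)
  -- propagation: all of C1 same side implies all of C2 same side
  have prop1 : ((a ∈ A ↔ b ∈ A) ∧ (b ∈ A ↔ c ∈ A) ∧ (c ∈ A ↔ d ∈ A)) →
      ((a' ∈ A ↔ b' ∈ A) ∧ (b' ∈ A ↔ c' ∈ A) ∧ (c' ∈ A ↔ d' ∈ A)) := by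
    rintro ⟨h1, h2, h3⟩
    have hpend : s(x, y) ∈ M := by
      have hx' := hx
      simp only [Set.mem_insert_iff, Set.mem_singleton_iff] at hx'
      rcases hx' with rfl | rfl | rfl | rfl
      · exact step1 x b d y hab hda.symm hxy hbd1 hyb hyd h1 (h1.trans (h2.trans h3))
      · exact step1 x a c y hab.symm hbc hxy hac1 hya hyc h1.symm h2
      · exact step1 x b d y hbc.symm hcd hxy hbd1 hyb hyd h2.symm h3
      · exact step1 x a c y hda hcd.symm hxy hac1 hya hyc
          (h1.trans (h2.trans h3)).symm h3.symm
    have hy' := hy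
    simp only [Set.mem_insert_iff, Set.mem_singleton_iff] at hy'
    rcases hy' with rfl | rfl | rfl | rfl
    · obtain ⟨k1, k2, k3⟩ := step2 y b' d' c' x hab' hda'.symm hbc' hcd'.symm hxb' hxd'
        hb'd'1 hpend
      exact ⟨k1, k1.symm.trans k3, k3.symm.trans k2⟩
    · obtain ⟨k1, k2, k3⟩ := step2 y a' c' d' x hab'.symm hbc' hda'.symm hcd' hxa' hxc'
        ha'c'1 hpend
      exact ⟨k1.symm, k2, k2.symm.trans k3⟩
    · obtain ⟨k1, k2, k3⟩ := step2 y b' d' a' x hbc'.symm hcd' hab'.symm hda' hxb' hxd'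
        hb'd'1 hpend
      exact ⟨k3.symm.trans k1, k1.symm, k2⟩
    · obtain ⟨k1, k2, k3⟩ := step2 y a' c' b' x hda' hcd'.symm hab' hbc'.symm hxa' hxc'
        ha'c'1 hpend
      exact ⟨k1.symm.trans k3, k3.symm.trans k2, k2.symm⟩
  -- reverse propagation
  have prop2 : ((a' ∈ A ↔ b' ∈ A) ∧ (b' ∈ A ↔ c' ∈ A) ∧ (c' ∈ A ↔ d' ∈ A)) →
      ((a ∈ A ↔ b ∈ A) ∧ (b ∈ A ↔ c ∈ A) ∧ (c ∈ A ↔ d ∈ A)) := by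
    rintro ⟨h1, h2, h3⟩
    have hpend : s(y, x) ∈ M := by
      have hy' := hy
      simp only [Set.mem_insert_iff, Set.mem_singleton_iff] at hy'
      rcases hy' with rfl | rfl | rfl | rfl
      · exact step1 y b' d' x hab' hda'.symm hxy.symm hb'd'1 hxb' hxd' h1
          (h1.trans (h2.trans h3))
      · exact step1 y a' c' x hab'.symm hbc' hxy.symm ha'c'1 hxa' hxc' h1.symm h2
      · exact step1 y b' d' x hbc'.symm hcd' hxy.symm hb'd'1 hxb' hxd' h2.symm h3
      · exact step1 y a' c' x hda' hcd'.symm hxy.symm ha'c'1 hxa' hxc'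
          (h1.trans (h2.trans h3)).symm h3.symm
    have hx' := hx
    simp only [Set.mem_insert_iff, Set.mem_singleton_iff] at hx'
    rcases hx' with rfl | rfl | rfl | rfl
    · obtain ⟨k1, k2, k3⟩ := step2 x b d c y hab hda.symm hbc hcd.symm hyb hyd hbd1 hpend
      exact ⟨k1, k1.symm.trans k3, k3.symm.trans k2⟩
    · obtain ⟨k1, k2, k3⟩ := step2 x a c d y hab.symm hbc hda.symm hcd hya hyc hac1 hpend
      exact ⟨k1.symm, k2, k2.symm.trans k3⟩
    · obtain ⟨k1, k2, k3⟩ := step2 x b d a y hbc.symm hcd hab.symm hda hyb hyd hbd1 hpend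
      exact ⟨k3.symm.trans k1, k1.symm, k2⟩
    · obtain ⟨k1, k2, k3⟩ := step2 x a c b y hda hcd.symm hab hbc.symm hya hyc hac1 hpend
      exact ⟨k1.symm.trans k3, k3.symm.trans k2, k2.symm⟩
  -- characterize nonemptiness of the intersections
  have char : ∀ p q r s : V, G.Adj p q → G.Adj q r → G.Adj r s → G.Adj s p →
      ((({s(p,q), s(q,r), s(r,s), s(s,p)} : Finset (Sym2 V)) ∩ M).Nonempty ↔
        ¬ ((p ∈ A ↔ q ∈ A) ∧ (q ∈ A ↔ r ∈ A) ∧ (r ∈ A ↔ s ∈ A))) := by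
    intro p q r s hpq hqr hrs hsp
    constructor
    · rintro ⟨e, he⟩
      rw [Finset.mem_inter] at he
      obtain ⟨he1, he2⟩ := he
      simp only [Finset.mem_insert, Finset.mem_singleton] at he1
      rcases he1 with rfl | rfl | rfl | rfl
      · exact fun h => (pmc_hlpA _ _).mp ((hA p q hpq).mp he2) h.1
      · exact fun h => (pmc_hlpA _ _).mp ((hA q r hqr).mp he2) h.2.1
      · exact fun h => (pmc_hlpA _ _).mp ((hA r s hrs).mp he2) h.2.2
      · exact fun h => (pmc_hlpA _ _).mp ((hA s p hsp).mp he2)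
          (h.2.2.symm.trans (h.2.1.symm.trans h.1.symm))
    · intro hns
      rcases pmc_hlpB _ _ _ _ hns with h | h | h
      · exact ⟨s(p,q), Finset.mem_inter.mpr ⟨by simp, (hA p q hpq).mpr h⟩⟩
      · exact ⟨s(q,r), Finset.mem_inter.mpr ⟨by simp, (hA q r hqr).mpr h⟩⟩
      · exact ⟨s(r,s), Finset.mem_inter.mpr ⟨by simp, (hA r s hrs).mpr h⟩⟩
  rw [char a b c d hab hbc hcd hda, char a' b' c' d' hab' hbc' hcd' hda']
  exact ⟨fun h1 h2 => h1 (prop2 h2), fun h1 h2 => h1 (prop1 h2)⟩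
end

section
/- Let G be a cubic graph and M a perfect matching cut of G. If a 6-vertex cycle C of G has at least three of its outgoing edges in M, then all six outgoing edges of V(C) are in M and no edge of C is in M. -/
open SimpleGraph

set_option synthInstance.maxSize 1000 in
set_option maxHeartbeats 1000000 in
private lemma sixKey : ∀ (a : Fin 6 → Bool),
    (∀ i : Fin 6, a (i - 1) = a i ∨ a i = a (i + 1)) →
    ∀ (i j k : Fin 6), i ≠ j → i ≠ k → j ≠ k →
    (a (i - 1) = a i ∧ a i = a (i + 1)) →
    (a (j - 1) = a j ∧ a j = a (j + 1)) →
    (a (k - 1) = a k ∧ a k = a (k + 1)) →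
    ∀ p q : Fin 6, a p = a q := by decide

set_option maxHeartbeats 2000000 in
/-- if a 6-cycle of a cubic graph with perfect matching cut `M` has at
least three of its outgoing edges in `M`, then all six outgoing edges of its vertex
set are in `M` and no edge of the cycle is in `M`. -/
theorem pmc_six_cycle_three_outgoing {V : Type*} [Fintype V] [DecidableEq V]
    (G : SimpleGraph V) [DecidableRel G.Adj] (M : Finset (Sym2 V))
    (hcubic : ∀ v : V, G.degree v = 3)
    (hM : ∀ e ∈ M, e ∈ G.edgeSet)
    (hPM : ∀ v : V, ∃! e, e ∈ M ∧ v ∈ e)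
    (hcut : ∃ A : Set V, ∀ u v : V, G.Adj u v → (s(u, v) ∈ M ↔ ((u ∈ A) ↔ v ∉ A)))
    (v₁ v₂ v₃ v₄ v₅ v₆ : V) (hdist : [v₁, v₂, v₃, v₄, v₅, v₆].Nodup)
    (h12 : G.Adj v₁ v₂) (h23 : G.Adj v₂ v₃) (h34 : G.Adj v₃ v₄)
    (h45 : G.Adj v₄ v₅) (h56 : G.Adj v₅ v₆) (h61 : G.Adj v₆ v₁)
    (hthree : ∃ x y z : V,
      x ∈ ({v₁, v₂, v₃, v₄, v₅, v₆} : Set V) ∧ y ∈ ({v₁, v₂, v₃, v₄, v₅, v₆} : Set V) ∧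
      z ∈ ({v₁, v₂, v₃, v₄, v₅, v₆} : Set V) ∧ x ≠ y ∧ x ≠ z ∧ y ≠ z ∧
      (∃ w, w ∉ ({v₁, v₂, v₃, v₄, v₅, v₆} : Set V) ∧ G.Adj x w ∧ s(x, w) ∈ M) ∧
      (∃ w, w ∉ ({v₁, v₂, v₃, v₄, v₅, v₆} : Set V) ∧ G.Adj y w ∧ s(y, w) ∈ M) ∧
      (∃ w, w ∉ ({v₁, v₂, v₃, v₄, v₅, v₆} : Set V) ∧ G.Adj z w ∧ s(z, w) ∈ M)) :
    (∀ x w : V, x ∈ ({v₁, v₂, v₃, v₄, v₅, v₆} : Set V) →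
        w ∉ ({v₁, v₂, v₃, v₄, v₅, v₆} : Set V) → G.Adj x w → s(x, w) ∈ M) ∧
      ∀ e ∈ ({s(v₁,v₂), s(v₂,v₃), s(v₃,v₄), s(v₄,v₅), s(v₅,v₆), s(v₆,v₁)} :
          Finset (Sym2 V)), e ∉ M := by
  classical
  obtain ⟨A, hA⟩ := hcut
  obtain ⟨x, y, z, hx, hy, hz, hxy, hxz, hyz, ⟨wx, hwx, haxw, hmx⟩,
    ⟨wy, hwy, hayw, hmy⟩, ⟨wz, hwz, hazw, hmz⟩⟩ := hthree
  set f : Fin 6 → V := ![v₁, v₂, v₃, v₄, v₅, v₆] with hf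
  have hf0 : f 0 = v₁ := rfl
  have hf1 : f 1 = v₂ := rfl
  have hf2 : f 2 = v₃ := rfl
  have hf3 : f 3 = v₄ := rfl
  have hf4 : f 4 = v₅ := rfl
  have hf5 : f 5 = v₆ := rfl
  have hmem : ∀ t : V, t ∈ ({v₁, v₂, v₃, v₄, v₅, v₆} : Set V) ↔ ∃ i : Fin 6, f i = t := by
    intro t
    simp only [Set.mem_insert_iff, Set.mem_singleton_iff]
    constructor
    · rintro (rfl | rfl | rfl | rfl | rfl | rfl)
      exacts [⟨0, rfl⟩, ⟨1, rfl⟩, ⟨2, rfl⟩, ⟨3, rfl⟩, ⟨4, rfl⟩, ⟨5, rfl⟩]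
    · rintro ⟨i, rfl⟩
      fin_cases i
      exacts [Or.inl rfl, Or.inr (Or.inl rfl), Or.inr (Or.inr (Or.inl rfl)),
        Or.inr (Or.inr (Or.inr (Or.inl rfl))),
        Or.inr (Or.inr (Or.inr (Or.inr (Or.inl rfl)))),
        Or.inr (Or.inr (Or.inr (Or.inr (Or.inr rfl))))]
  have hne : ∀ i j : Fin 6, i ≠ j → f i ≠ f j := by
    simp only [List.nodup_cons, List.mem_cons, List.not_mem_nil, List.mem_singleton,
      or_false, List.nodup_nil, and_true, not_or] at hdist
    have a12 : v₁ ≠ v₂ := by tauto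
    have a13 : v₁ ≠ v₃ := by tauto
    have a14 : v₁ ≠ v₄ := by tauto
    have a15 : v₁ ≠ v₅ := by tauto
    have a16 : v₁ ≠ v₆ := by tauto
    have a23 : v₂ ≠ v₃ := by tauto
    have a24 : v₂ ≠ v₄ := by tauto
    have a25 : v₂ ≠ v₅ := by tauto
    have a26 : v₂ ≠ v₆ := by tauto
    have a34 : v₃ ≠ v₄ := by tauto
    have a35 : v₃ ≠ v₅ := by tauto
    have a36 : v₃ ≠ v₆ := by tauto
    have a45 : v₄ ≠ v₅ := by tauto
    have a46 : v₄ ≠ v₆ := by tauto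
    have a56 : v₅ ≠ v₆ := by tauto
    intro i j hij
    fin_cases i <;> fin_cases j
    exacts [absurd rfl hij, a12, a13, a14, a15, a16,
      a12.symm, absurd rfl hij, a23, a24, a25, a26,
      a13.symm, a23.symm, absurd rfl hij, a34, a35, a36,
      a14.symm, a24.symm, a34.symm, absurd rfl hij, a45, a46,
      a15.symm, a25.symm, a35.symm, a45.symm, absurd rfl hij, a56,
      a16.symm, a26.symm, a36.symm, a46.symm, a56.symm, absurd rfl hij]
  have huniq : ∀ (t : V) (e e' : Sym2 V), e ∈ M → t ∈ e → e' ∈ M → t ∈ e' → e = e' := by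
    intro t e e' he hte he' hte'
    obtain ⟨d, -, hd⟩ := hPM t
    rw [hd e ⟨he, hte⟩, hd e' ⟨he', hte'⟩]
  have hadj : ∀ i : Fin 6, G.Adj (f i) (f (i + 1)) := by
    intro i
    fin_cases i
    exacts [h12, h23, h34, h45, h56, h61]
  have hsub1 : ∀ i : Fin 6, i - 1 + 1 = i := by decide
  have hd1 : ∀ i : Fin 6, i - 1 ≠ i := by decide
  have hd2 : ∀ i : Fin 6, i - 1 ≠ i + 1 := by decide
  have hd3 : ∀ i : Fin 6, i + 1 ≠ i := by decide
  set a : Fin 6 → Bool := fun i => decide (f i ∈ A) with ha'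
  have ha : ∀ i : Fin 6, a i = true ↔ f i ∈ A := by
    intro i; simp [ha']
  have hiffM : ∀ i : Fin 6, s(f i, f (i + 1)) ∈ M ↔ ¬ a i = a (i + 1) := by
    intro i
    rw [hA _ _ (hadj i), ← ha i, ← ha (i + 1)]
    cases h1 : a i <;> cases h2 : a (i + 1) <;> decide
  have hnadj : ∀ i : Fin 6, a (i - 1) = a i ∨ a i = a (i + 1) := by
    intro i
    by_contra h
    push_neg at h
    obtain ⟨h1, h2⟩ := h
    have e1 : s(f (i - 1), f i) ∈ M := by
      have := (hiffM (i - 1)).2 (by rw [hsub1 i]; exact h1)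
      rwa [hsub1 i] at this
    have e2 : s(f i, f (i + 1)) ∈ M := (hiffM i).2 h2
    have heq := huniq (f i) _ _ e1 (Sym2.mem_mk_right _ _) e2 (Sym2.mem_mk_left _ _)
    rw [Sym2.eq_iff] at heq
    rcases heq with ⟨hq1, _⟩ | ⟨hq1, _⟩
    · exact hne _ _ (hd1 i) hq1
    · exact hne _ _ (hd2 i) hq1
  have hEdgeOut : ∀ (i : Fin 6) (w0 : V), (∀ j : Fin 6, f j ≠ w0) → s(f i, w0) ∈ M →
      a (i - 1) = a i ∧ a i = a (i + 1) := by
    intro i w0 hw0 hm0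
    constructor
    · by_contra hc
      have e1 : s(f (i - 1), f i) ∈ M := by
        have := (hiffM (i - 1)).2 (by rw [hsub1 i]; exact hc)
        rwa [hsub1 i] at this
      have heq := huniq (f i) _ _ e1 (Sym2.mem_mk_right _ _) hm0 (Sym2.mem_mk_left _ _)
      rw [Sym2.eq_iff] at heq
      rcases heq with ⟨hq1, _⟩ | ⟨hq1, _⟩
      · exact hne _ _ (hd1 i) hq1
      · exact hw0 _ hq1
    · by_contra hc
      have e2 : s(f i, f (i + 1)) ∈ M := (hiffM i).2 hc
      have heq := huniq (f i) _ _ e2 (Sym2.mem_mk_left _ _) hm0 (Sym2.mem_mk_left _ _)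
      rw [Sym2.eq_iff] at heq
      rcases heq with ⟨_, hq2⟩ | ⟨_, hq2⟩
      · exact hw0 _ hq2
      · exact hne _ _ (hd3 i) hq2
  obtain ⟨ix, hix⟩ := (hmem x).1 hx
  obtain ⟨iy, hiy⟩ := (hmem y).1 hy
  obtain ⟨iz, hiz⟩ := (hmem z).1 hz
  have hCx : ∀ j : Fin 6, f j ≠ wx := fun j hj => hwx ((hmem wx).2 ⟨j, hj⟩)
  have hCy : ∀ j : Fin 6, f j ≠ wy := fun j hj => hwy ((hmem wy).2 ⟨j, hj⟩)
  have hCz : ∀ j : Fin 6, f j ≠ wz := fun j hj => hwz ((hmem wz).2 ⟨j, hj⟩)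
  have ex := hEdgeOut ix wx hCx (by rw [hix]; exact hmx)
  have ey := hEdgeOut iy wy hCy (by rw [hiy]; exact hmy)
  have ez := hEdgeOut iz wz hCz (by rw [hiz]; exact hmz)
  have hxyi : ix ≠ iy := fun h => hxy (by rw [← hix, ← hiy, h])
  have hxzi : ix ≠ iz := fun h => hxz (by rw [← hix, ← hiz, h])
  have hyzi : iy ≠ iz := fun h => hyz (by rw [← hiy, ← hiz, h])
  have hallB := sixKey a hnadj ix iy iz hxyi hxzi hyzi ex ey ez
  have hall : ∀ p q : Fin 6, (f p ∈ A ↔ f q ∈ A) := by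
    intro p q
    rw [← ha p, ← ha q, hallB p q]
  have hnoc : ∀ i j : Fin 6, s(f i, f j) ∉ M := by
    intro i j h
    have hadj' : G.Adj (f i) (f j) := (G.mem_edgeSet).1 (hM _ h)
    have h1 := (hA _ _ hadj').1 h
    have h2 := hall i j
    tauto
  constructor
  · intro x' w hx' hw hadjxw
    obtain ⟨i, hi⟩ := (hmem x').1 hx'
    subst hi
    obtain ⟨e, ⟨heM, hei⟩, -⟩ := hPM (f i)
    obtain ⟨u, rfl⟩ := Sym2.mem_iff_exists.1 hei
    have hadju : G.Adj (f i) u := (G.mem_edgeSet).1 (hM _ heM)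
    have hu : ∀ j : Fin 6, f j ≠ u := by
      intro j hj
      exact hnoc i j (by rw [hj]; exact heM)
    have hwj : ∀ j : Fin 6, f j ≠ w := fun j hj => hw ((hmem w).2 ⟨j, hj⟩)
    have hwu : w = u := by
      by_contra hwu
      have hnem : G.Adj (f i) (f (i - 1)) := by
        have := hadj (i - 1)
        rw [hsub1 i] at this
        exact this.symm
      have hsub4 : ({f (i - 1), f (i + 1), u, w} : Finset V) ⊆ G.neighborFinset (f i) := by
        intro t ht
        simp only [Finset.mem_insert, Finset.mem_singleton] at ht
        rcases ht with rfl | rfl | rfl | rfl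
        · exact (G.mem_neighborFinset _ _).2 hnem
        · exact (G.mem_neighborFinset _ _).2 (hadj i)
        · exact (G.mem_neighborFinset _ _).2 hadju
        · exact (G.mem_neighborFinset _ _).2 hadjxw
      have d1 : f (i - 1) ≠ f (i + 1) := hne _ _ (hd2 i)
      have d2 : f (i - 1) ≠ u := hu _
      have d3 : f (i + 1) ≠ u := hu _
      have d4 : f (i - 1) ≠ w := hwj _
      have d5 : f (i + 1) ≠ w := hwj _
      have d6 : u ≠ w := fun h => hwu h.symm
      have hcard : ({f (i - 1), f (i + 1), u, w} : Finset V).card = 4 := by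
        rw [Finset.card_insert_of_notMem (by simp [d1, d2, d4]),
          Finset.card_insert_of_notMem (by simp [d3, d5]),
          Finset.card_insert_of_notMem (by simp [d6]), Finset.card_singleton]
      have hle := Finset.card_le_card hsub4
      rw [hcard, G.card_neighborFinset_eq_degree, hcubic] at hle
      omega
    rw [hwu]
    exact heM
  · intro e he
    simp only [Finset.mem_insert, Finset.mem_singleton] at he
    rcases he with rfl | rfl | rfl | rfl | rfl | rfl
    · rw [← hf0, ← hf1]; exact hnoc 0 1
    · rw [← hf1, ← hf2]; exact hnoc 1 2
    · rw [← hf2, ← hf3]; exact hnoc 2 3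
    · rw [← hf3, ← hf4]; exact hnoc 3 4
    · rw [← hf4, ← hf5]; exact hnoc 4 5
    · rw [← hf5, ← hf0]; exact hnoc 5 0
end

section
/- Let G be a cubic graph and M a perfect matching cut of G. If C is an induced 4-vertex cycle of G such that some edge of G with exactly one endpoint in V(C) does not belong to M, then M contains exactly two (disjoint) edges of C and no outgoing edge of V(C) belongs to M. -/
open SimpleGraph Finset

private lemma two_edges {V : Type*} [DecidableEq V] (M : Finset (Sym2 V))
    (hPM : ∀ v : V, ∃! e, e ∈ M ∧ v ∈ e) (x y z : V) (hyz : y ≠ z)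
    (hy : s(x, y) ∈ M) (hz : s(x, z) ∈ M) : False := by
  obtain ⟨e, -, hu⟩ := hPM x
  have h1 := hu s(x, y) ⟨hy, by simp⟩
  have h2 := hu s(x, z) ⟨hz, by simp⟩
  rw [← h2] at h1
  exact hyz (Sym2.congr_right.mp h1)

private lemma inter_eq24 {α : Type*} [DecidableEq α] (e1 e2 e3 e4 : α) (M : Finset α)
    (h1 : e1 ∉ M) (h2 : e2 ∈ M) (h3 : e3 ∉ M) (h4 : e4 ∈ M) :
    ({e1, e2, e3, e4} : Finset α) ∩ M = {e2, e4} := by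
  ext e
  simp only [Finset.mem_inter, Finset.mem_insert, Finset.mem_singleton]
  constructor
  · rintro ⟨(rfl | rfl | rfl | rfl), hm⟩ <;> tauto
  · rintro (rfl | rfl) <;> exact ⟨by tauto, by assumption⟩

private lemma inter_eq13 {α : Type*} [DecidableEq α] (e1 e2 e3 e4 : α) (M : Finset α)
    (h1 : e1 ∈ M) (h2 : e2 ∉ M) (h3 : e3 ∈ M) (h4 : e4 ∉ M) :
    ({e1, e2, e3, e4} : Finset α) ∩ M = {e1, e3} := by
  ext e
  simp only [Finset.mem_inter, Finset.mem_insert, Finset.mem_singleton]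
  constructor
  · rintro ⟨(rfl | rfl | rfl | rfl), hm⟩ <;> tauto
  · rintro (rfl | rfl) <;> exact ⟨by tauto, by assumption⟩

private lemma no_out {V : Type*} [DecidableEq V] (G : SimpleGraph V) (M : Finset (Sym2 V))
    (hPM : ∀ v : V, ∃! e, e ∈ M ∧ v ∈ e) (a b c d ya yb yc yd : V)
    (ea : s(a, ya) ∈ M) (eb : s(b, yb) ∈ M) (ec : s(c, yc) ∈ M) (ed : s(d, yd) ∈ M)
    (ma : ya ∈ ({a, b, c, d} : Set V)) (mb : yb ∈ ({a, b, c, d} : Set V))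
    (mc : yc ∈ ({a, b, c, d} : Set V)) (md : yd ∈ ({a, b, c, d} : Set V)) :
    ∀ x w : V, x ∈ ({a, b, c, d} : Set V) → w ∉ ({a, b, c, d} : Set V) →
      G.Adj x w → s(x, w) ∉ M := by
  intro x w hx hw _ hmem
  simp only [Set.mem_insert_iff, Set.mem_singleton_iff] at hx
  rcases hx with rfl | rfl | rfl | rfl
  · exact two_edges M hPM x ya w (fun h => hw (h ▸ ma)) ea hmem
  · exact two_edges M hPM x yb w (fun h => hw (h ▸ mb)) eb hmem
  · exact two_edges M hPM x yc w (fun h => hw (h ▸ mc)) ec hmem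
  · exact two_edges M hPM x yd w (fun h => hw (h ▸ md)) ed hmem

private lemma no_cross {V : Type*} [Fintype V] [DecidableEq V] (G : SimpleGraph V)
    [DecidableRel G.Adj] (M : Finset (Sym2 V)) (hcubic : ∀ v : V, G.degree v = 3)
    (hM : ∀ e ∈ M, e ∈ G.edgeSet) (hPM : ∀ v : V, ∃! e, e ∈ M ∧ v ∈ e) (A : Set V)
    (key : ∀ u v : V, G.Adj u v → (s(u, v) ∈ M ↔ ((u ∈ A) ↔ v ∉ A)))
    (x n1 n2 w : V) (a1 : G.Adj x n1) (a2 : G.Adj x n2) (aw : G.Adj x w)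
    (d12 : n1 ≠ n2) (d1w : n1 ≠ w) (d2w : n2 ≠ w)
    (s1 : x ∈ A ↔ n1 ∈ A) (s2 : x ∈ A ↔ n2 ∈ A) (sw : x ∈ A ↔ w ∈ A) : False := by
  obtain ⟨e, ⟨heM, hxe⟩, -⟩ := hPM x
  have hspec : s(x, Sym2.Mem.other hxe) = e := Sym2.other_spec hxe
  set y := Sym2.Mem.other hxe with hy
  have hyM : s(x, y) ∈ M := hspec ▸ heM
  have hadj : G.Adj x y := G.mem_edgeSet.mp (hspec ▸ hM e heM)
  have hcross := (key x y hadj).mp hyM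
  have hmem : y ∈ G.neighborFinset x := by simpa using hadj
  have hsub : ({n1, n2, w} : Finset V) ⊆ G.neighborFinset x := by
    intro z hz
    simp only [Finset.mem_insert, Finset.mem_singleton] at hz
    rcases hz with rfl | rfl | rfl <;> simpa
  have hcard : ({n1, n2, w} : Finset V).card = 3 := by
    rw [Finset.card_insert_of_notMem (by simp [d12, d1w]),
        Finset.card_insert_of_notMem (by simp [d2w])]
    simp
  have heq : ({n1, n2, w} : Finset V) = G.neighborFinset x := by
    apply Finset.eq_of_subset_of_card_le hsub
    rw [hcard]
    exact le_of_eq (hcubic x)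
  rw [← heq] at hmem
  simp only [Finset.mem_insert, Finset.mem_singleton] at hmem
  rcases hmem with rfl | rfl | rfl <;> tauto

private lemma good_opp {V : Type*} [DecidableEq V] (G : SimpleGraph V) (M : Finset (Sym2 V))
    (hPM : ∀ v : V, ∃! e, e ∈ M ∧ v ∈ e) (a b c d : V)
    (m1 : s(a, b) ∈ M) (n2 : s(b, c) ∉ M) (m3 : s(c, d) ∈ M) (n4 : s(d, a) ∉ M) :
    (({s(a,b), s(b,c), s(c,d), s(d,a)} : Finset (Sym2 V)) ∩ M
        = ({s(a,b), s(c,d)} : Finset (Sym2 V)) ∨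
      ({s(a,b), s(b,c), s(c,d), s(d,a)} : Finset (Sym2 V)) ∩ M
        = ({s(b,c), s(d,a)} : Finset (Sym2 V))) ∧
      ∀ x w : V, x ∈ ({a, b, c, d} : Set V) → w ∉ ({a, b, c, d} : Set V) →
        G.Adj x w → s(x, w) ∉ M := by
  refine ⟨Or.inl (inter_eq13 _ _ _ _ M m1 n2 m3 n4),
    no_out G M hPM a b c d b a d c m1 (by rw [Sym2.eq_swap]; exact m1) m3
      (by rw [Sym2.eq_swap]; exact m3) (by simp) (by simp) (by simp) (by simp)⟩

private lemma good_adj {V : Type*} [DecidableEq V] (G : SimpleGraph V) (M : Finset (Sym2 V))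
    (hPM : ∀ v : V, ∃! e, e ∈ M ∧ v ∈ e) (a b c d : V)
    (n1 : s(a, b) ∉ M) (m2 : s(b, c) ∈ M) (n3 : s(c, d) ∉ M) (m4 : s(d, a) ∈ M) :
    (({s(a,b), s(b,c), s(c,d), s(d,a)} : Finset (Sym2 V)) ∩ M
        = ({s(a,b), s(c,d)} : Finset (Sym2 V)) ∨
      ({s(a,b), s(b,c), s(c,d), s(d,a)} : Finset (Sym2 V)) ∩ M
        = ({s(b,c), s(d,a)} : Finset (Sym2 V))) ∧
      ∀ x w : V, x ∈ ({a, b, c, d} : Set V) → w ∉ ({a, b, c, d} : Set V) →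
        G.Adj x w → s(x, w) ∉ M := by
  refine ⟨Or.inr (inter_eq24 _ _ _ _ M n1 m2 n3 m4),
    no_out G M hPM a b c d d c b a (by rw [Sym2.eq_swap]; exact m4) m2
      (by rw [Sym2.eq_swap]; exact m2) m4 (by simp) (by simp) (by simp) (by simp)⟩

/-- in a cubic graph with perfect matching cut `M`, if an induced
4-cycle has some outgoing edge not in `M`, then `M` contains exactly two opposite
edges of the cycle and no outgoing edge of the cycle. -/
theorem pmc_four_cycle_with_missing_outgoing {V : Type*} [Fintype V] [DecidableEq V]
    (G : SimpleGraph V) [DecidableRel G.Adj] (M : Finset (Sym2 V))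
    (hcubic : ∀ v : V, G.degree v = 3)
    (hM : ∀ e ∈ M, e ∈ G.edgeSet)
    (hPM : ∀ v : V, ∃! e, e ∈ M ∧ v ∈ e)
    (hcut : ∃ A : Set V, ∀ u v : V, G.Adj u v → (s(u, v) ∈ M ↔ ((u ∈ A) ↔ v ∉ A)))
    (a b c d : V) (hdist : [a, b, c, d].Nodup)
    (hab : G.Adj a b) (hbc : G.Adj b c) (hcd : G.Adj c d) (hda : G.Adj d a)
    (hac : ¬ G.Adj a c) (hbd : ¬ G.Adj b d)
    (hout : ∃ x w : V, x ∈ ({a, b, c, d} : Set V) ∧ w ∉ ({a, b, c, d} : Set V) ∧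
      G.Adj x w ∧ s(x, w) ∉ M) :
    (({s(a,b), s(b,c), s(c,d), s(d,a)} : Finset (Sym2 V)) ∩ M
        = ({s(a,b), s(c,d)} : Finset (Sym2 V)) ∨
      ({s(a,b), s(b,c), s(c,d), s(d,a)} : Finset (Sym2 V)) ∩ M
        = ({s(b,c), s(d,a)} : Finset (Sym2 V))) ∧
      ∀ x w : V, x ∈ ({a, b, c, d} : Set V) → w ∉ ({a, b, c, d} : Set V) →
        G.Adj x w → s(x, w) ∉ M := by
  classical
  obtain ⟨A, key⟩ := hcut
  simp only [List.nodup_cons, List.mem_cons, List.not_mem_nil, or_false, not_or,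
    List.mem_singleton, List.nodup_nil, and_true] at hdist
  obtain ⟨⟨hab', hac', had'⟩, ⟨hbc', hbd'⟩, hcd'⟩ := hdist
  have allsame : (a ∈ A ↔ b ∈ A) → (a ∈ A ↔ c ∈ A) → (a ∈ A ↔ d ∈ A) → False := by
    intro q1 q2 q3
    obtain ⟨x, w, hx, hw, hxw, hxwM⟩ := hout
    have hside : x ∈ A ↔ w ∈ A :=
      not_iff_not.mp (not_iff.mp (fun hh => hxwM ((key x w hxw).mpr hh)))
    simp only [Set.mem_insert_iff, Set.mem_singleton_iff] at hx hw
    push_neg at hw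
    obtain ⟨w1, w2, w3, w4⟩ := hw
    rcases hx with rfl | rfl | rfl | rfl
    · exact no_cross G M hcubic hM hPM A key x b d w hab hda.symm hxw hbd'
        (Ne.symm w2) (Ne.symm w4) q1 q3 hside
    · exact no_cross G M hcubic hM hPM A key x a c w hab.symm hbc hxw hac'
        (Ne.symm w1) (Ne.symm w3) q1.symm (q1.symm.trans q2) hside
    · exact no_cross G M hcubic hM hPM A key x b d w hbc.symm hcd hxw hbd'
        (Ne.symm w2) (Ne.symm w4) (q2.symm.trans q1) (q2.symm.trans q3) hside
    · exact no_cross G M hcubic hM hPM A key x c a w hcd.symm hda hxw (Ne.symm hac')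
        (Ne.symm w3) (Ne.symm w1) (q3.symm.trans q2) q3.symm hside
  by_cases ha : a ∈ A <;> by_cases hb : b ∈ A <;> by_cases hc : c ∈ A <;> by_cases hd : d ∈ A
  · exact (allsame (iff_of_true ha hb) (iff_of_true ha hc) (iff_of_true ha hd)).elim
  · -- TTTF : odd d, nbrs c a
    exact (two_edges M hPM d c a (Ne.symm hac')
      ((key d c hcd.symm).mpr (iff_of_false hd (not_not_intro hc)))
      ((key d a hda).mpr (iff_of_false hd (not_not_intro ha)))).elim
  · -- TTFT : odd c, nbrs b d
    exact (two_edges M hPM c b d hbd'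
      ((key c b hbc.symm).mpr (iff_of_false hc (not_not_intro hb)))
      ((key c d hcd).mpr (iff_of_false hc (not_not_intro hd)))).elim
  · -- TTFF : good {bc, da}
    exact good_adj G M hPM a b c d (fun h => ((key a b hab).mp h).mp ha hb)
      ((key b c hbc).mpr (iff_of_true hb hc))
      (fun h => hc (((key c d hcd).mp h).mpr hd))
      ((key d a hda).mpr (iff_of_false hd (not_not_intro ha)))
  · -- TFTT : odd b, nbrs a c
    exact (two_edges M hPM b a c hac'
      ((key b a hab.symm).mpr (iff_of_false hb (not_not_intro ha)))
      ((key b c hbc).mpr (iff_of_false hb (not_not_intro hc)))).elim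
  · -- TFTF : alternating, odd a, nbrs b d
    exact (two_edges M hPM a b d hbd'
      ((key a b hab).mpr (iff_of_true ha hb))
      ((key a d hda.symm).mpr (iff_of_true ha hd))).elim
  · -- TFFT : good {ab, cd}
    exact good_opp G M hPM a b c d ((key a b hab).mpr (iff_of_true ha hb))
      (fun h => hb (((key b c hbc).mp h).mpr hc))
      ((key c d hcd).mpr (iff_of_false hc (not_not_intro hd)))
      (fun h => ((key d a hda).mp h).mp hd ha)
  · -- TFFF : odd a, nbrs b d
    exact (two_edges M hPM a b d hbd'
      ((key a b hab).mpr (iff_of_true ha hb))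
      ((key a d hda.symm).mpr (iff_of_true ha hd))).elim
  · -- FTTT : odd a, nbrs b d
    exact (two_edges M hPM a b d hbd'
      ((key a b hab).mpr (iff_of_false ha (not_not_intro hb)))
      ((key a d hda.symm).mpr (iff_of_false ha (not_not_intro hd)))).elim
  · -- FTTF : good {ab, cd}
    exact good_opp G M hPM a b c d ((key a b hab).mpr (iff_of_false ha (not_not_intro hb)))
      (fun h => ((key b c hbc).mp h).mp hb hc)
      ((key c d hcd).mpr (iff_of_true hc hd))
      (fun h => hd (((key d a hda).mp h).mpr ha))
  · -- FTFT : alternating, odd a, nbrs b d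
    exact (two_edges M hPM a b d hbd'
      ((key a b hab).mpr (iff_of_false ha (not_not_intro hb)))
      ((key a d hda.symm).mpr (iff_of_false ha (not_not_intro hd)))).elim
  · -- FTFF : odd b, nbrs a c
    exact (two_edges M hPM b a c hac'
      ((key b a hab.symm).mpr (iff_of_true hb ha))
      ((key b c hbc).mpr (iff_of_true hb hc))).elim
  · -- FFTT : good {bc, da}
    exact good_adj G M hPM a b c d (fun h => ha (((key a b hab).mp h).mpr hb))
      ((key b c hbc).mpr (iff_of_false hb (not_not_intro hc)))
      (fun h => ((key c d hcd).mp h).mp hc hd)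
      ((key d a hda).mpr (iff_of_true hd ha))
  · -- FFTF : odd c, nbrs b d
    exact (two_edges M hPM c b d hbd'
      ((key c b hbc.symm).mpr (iff_of_true hc hb))
      ((key c d hcd).mpr (iff_of_true hc hd))).elim
  · -- FFFT : odd d, nbrs c a
    exact (two_edges M hPM d c a (Ne.symm hac')
      ((key d c hcd.symm).mpr (iff_of_true hd hc))
      ((key d a hda).mpr (iff_of_true hd ha))).elim
  · exact (allsame (iff_of_false ha hb) (iff_of_false ha hc) (iff_of_false ha hd)).elim
end

section
/- Let G be a cubic graph and M a perfect matching cut of G. Let C₁, C₂, ..., C_k be pairwise vertex-disjoint induced 4-vertex cycles of G such that for each i < k there is an edge of G joining V(C_i) to V(C_{i+1}), and suppose some edge of G with exactly one endpoint in V(C₁) does not belong to M. Then for every i, M contains exactly two edges of C_i and no outgoing edge of V(C_i) belongs to M. -/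
open SimpleGraph

lemma pmc_uniq {V : Type*} (M : Finset (Sym2 V))
    (hPM : ∀ v : V, ∃! e, e ∈ M ∧ v ∈ e)
    (v : V) (e1 e2 : Sym2 V) (h1 : e1 ∈ M) (h2 : e2 ∈ M)
    (hv1 : v ∈ e1) (hv2 : v ∈ e2) : e1 = e2 := by
  obtain ⟨e, _, hu⟩ := hPM v
  rw [hu e1 ⟨h1, hv1⟩, hu e2 ⟨h2, hv2⟩]

lemma pmc_noout {V : Type*} (M : Finset (Sym2 V))
    (hPM : ∀ v : V, ∃! e, e ∈ M ∧ v ∈ e)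
    (p q x w : V) (hm : s(p,q) ∈ M) (hx : x = p ∨ x = q)
    (hwp : w ≠ p) (hwq : w ≠ q) : s(x,w) ∉ M := by
  intro h
  have heq : s(x,w) = s(p,q) :=
    pmc_uniq M hPM x _ _ h hm (by simp) (by rcases hx with rfl|rfl <;> simp)
  rw [Sym2.eq_iff] at heq
  rcases heq with ⟨_, h'⟩|⟨_, h'⟩ <;> simp_all

lemma pmc_nbrs {V : Type*} [Fintype V] [DecidableEq V]
    (G : SimpleGraph V) [DecidableRel G.Adj]
    (hcubic : ∀ v : V, G.degree v = 3) (v n1 n2 n3 : V)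
    (h12 : n1 ≠ n2) (h13 : n1 ≠ n3) (h23 : n2 ≠ n3)
    (a1 : G.Adj v n1) (a2 : G.Adj v n2) (a3 : G.Adj v n3)
    (u : V) (hu : G.Adj v u) : u = n1 ∨ u = n2 ∨ u = n3 := by
  have hsub : ({n1,n2,n3} : Finset V) ⊆ G.neighborFinset v := by
    intro x hx
    rw [SimpleGraph.mem_neighborFinset]
    rcases Finset.mem_insert.mp hx with rfl | hx
    · exact a1
    · rcases Finset.mem_insert.mp hx with rfl | hx
      · exact a2
      · rw [Finset.mem_singleton] at hx; subst hx; exact a3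
  have hcard : ({n1,n2,n3} : Finset V).card = 3 := by
    rw [Finset.card_insert_of_notMem (by simp [h12,h13]),
      Finset.card_insert_of_notMem (by simp [h23]), Finset.card_singleton]
  have hdeg : (G.neighborFinset v).card = 3 := hcubic v
  have heq : ({n1,n2,n3} : Finset V) = G.neighborFinset v :=
    Finset.eq_of_subset_of_card_le hsub (by rw [hcard, hdeg])
  have : u ∈ G.neighborFinset v := by rwa [SimpleGraph.mem_neighborFinset]
  rw [← heq] at this
  simpa using this

lemma pmc_key2 {V : Type*} (G : SimpleGraph V) (M : Finset (Sym2 V))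
    (hPM : ∀ v : V, ∃! e, e ∈ M ∧ v ∈ e)
    (hcut : ∃ A : Set V, ∀ u v : V, G.Adj u v → (s(u, v) ∈ M ↔ ((u ∈ A) ↔ v ∉ A)))
    (a b c d : V)
    (hab : G.Adj a b) (hbc : G.Adj b c) (hcd : G.Adj c d) (hda : G.Adj d a)
    (nab : a ≠ b) (nac : a ≠ c) (nbd : b ≠ d)
    (hm : s(a,b) ∈ M) : s(c,d) ∈ M ∧ s(b,c) ∉ M ∧ s(d,a) ∉ M := by
  have hbc' : s(b,c) ∉ M := by
    intro h
    have := pmc_uniq M hPM b _ _ h hm (by simp) (by simp)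
    rw [Sym2.eq_iff] at this
    rcases this with ⟨h1,h2⟩|⟨h1,h2⟩
    · exact nab h1.symm
    · exact nac h2.symm
  have hda' : s(d,a) ∉ M := by
    intro h
    have := pmc_uniq M hPM a _ _ h hm (by simp) (by simp)
    rw [Sym2.eq_iff] at this
    rcases this with ⟨h1,h2⟩|⟨h1,h2⟩
    · exact nab h2
    · exact nbd h1.symm
  obtain ⟨A, hA⟩ := hcut
  have h1 := (hA a b hab).mp hm
  have h2 := hA b c hbc
  have h3 := hA d a hda
  have h4 := hA c d hcd
  refine ⟨h4.mpr ?_, hbc', hda'⟩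
  rw [h2] at hbc'
  rw [h3] at hda'
  clear hPM h2 h3 h4 hab hbc hcd hda hm nab nac nbd hA
  tauto

lemma pmc_single {V : Type*} [Fintype V] [DecidableEq V]
    (G : SimpleGraph V) [DecidableRel G.Adj] (M : Finset (Sym2 V))
    (hcubic : ∀ v : V, G.degree v = 3)
    (hM : ∀ e ∈ M, e ∈ G.edgeSet)
    (hPM : ∀ v : V, ∃! e, e ∈ M ∧ v ∈ e)
    (hcut : ∃ A : Set V, ∀ u v : V, G.Adj u v → (s(u, v) ∈ M ↔ ((u ∈ A) ↔ v ∉ A)))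
    (a b c d : V) (hnd : [a, b, c, d].Nodup)
    (hab : G.Adj a b) (hbc : G.Adj b c) (hcd : G.Adj c d) (hda : G.Adj d a)
    (x w : V) (hx : x ∈ ({a, b, c, d} : Set V)) (hw : w ∉ ({a, b, c, d} : Set V))
    (hxw : G.Adj x w) (hnm : s(x, w) ∉ M) :
    (({s(a, b), s(b, c), s(c, d), s(d, a)} : Finset (Sym2 V)) ∩ M
        = ({s(a, b), s(c, d)} : Finset (Sym2 V)) ∨
      ({s(a, b), s(b, c), s(c, d), s(d, a)} : Finset (Sym2 V)) ∩ M
        = ({s(b, c), s(d, a)} : Finset (Sym2 V))) ∧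
    ∀ x' w' : V, x' ∈ ({a, b, c, d} : Set V) →
      w' ∉ ({a, b, c, d} : Set V) → G.Adj x' w' → s(x', w') ∉ M := by
  simp only [List.nodup_cons, List.mem_cons, List.mem_singleton, List.not_mem_nil,
    or_false, not_or, List.nodup_nil, and_true] at hnd
  obtain ⟨⟨nab, nac, nad⟩, ⟨nbc, nbd⟩, ncd, -⟩ := hnd
  simp only [Set.mem_insert_iff, Set.mem_singleton_iff, not_or] at hx hw
  obtain ⟨nwa, nwb, nwc, nwd⟩ := hw
  -- matched partner of x
  obtain ⟨e, ⟨heM, hxe⟩, -⟩ := hPM x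
  obtain ⟨u, rfl⟩ : ∃ u, e = s(x, u) := ⟨Sym2.Mem.other hxe, (Sym2.other_spec hxe).symm⟩
  have hadj : G.Adj x u := (G.mem_edgeSet).mp (hM _ heM)
  have hune : u ≠ w := by rintro rfl; exact hnm heM
  -- one of the four cycle edges is in M
  have H : s(a,b) ∈ M ∨ s(b,c) ∈ M ∨ s(c,d) ∈ M ∨ s(d,a) ∈ M := by
    rcases hx with rfl | rfl | rfl | rfl
    · rcases pmc_nbrs G hcubic x b d w nbd (fun h => nwb h.symm) (fun h => nwd h.symm)
        hab hda.symm hxw u hadj with rfl | rfl | rfl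
      · exact Or.inl heM
      · exact Or.inr (Or.inr (Or.inr (by rwa [Sym2.eq_swap] at heM)))
      · exact absurd rfl hune
    · rcases pmc_nbrs G hcubic x a c w nac (fun h => nwa h.symm) (fun h => nwc h.symm)
        hab.symm hbc hxw u hadj with rfl | rfl | rfl
      · exact Or.inl (by rwa [Sym2.eq_swap] at heM)
      · exact Or.inr (Or.inl heM)
      · exact absurd rfl hune
    · rcases pmc_nbrs G hcubic x b d w nbd (fun h => nwb h.symm) (fun h => nwd h.symm)
        hbc.symm hcd hxw u hadj with rfl | rfl | rfl
      · exact Or.inr (Or.inl (by rwa [Sym2.eq_swap] at heM))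
      · exact Or.inr (Or.inr (Or.inl heM))
      · exact absurd rfl hune
    · rcases pmc_nbrs G hcubic x a c w nac (fun h => nwa h.symm) (fun h => nwc h.symm)
        hda hcd.symm hxw u hadj with rfl | rfl | rfl
      · exact Or.inr (Or.inr (Or.inr heM))
      · exact Or.inr (Or.inr (Or.inl (by rwa [Sym2.eq_swap] at heM)))
      · exact absurd rfl hune
  have P : (s(a,b) ∈ M ∧ s(c,d) ∈ M ∧ s(b,c) ∉ M ∧ s(d,a) ∉ M) ∨
      (s(b,c) ∈ M ∧ s(d,a) ∈ M ∧ s(a,b) ∉ M ∧ s(c,d) ∉ M) := by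
    rcases H with h | h | h | h
    · obtain ⟨h1, h2, h3⟩ := pmc_key2 G M hPM hcut a b c d hab hbc hcd hda nab nac nbd h
      exact Or.inl ⟨h, h1, h2, h3⟩
    · obtain ⟨h1, h2, h3⟩ := pmc_key2 G M hPM hcut b c d a hbc hcd hda hab nbc nbd
        (fun hh => nac hh.symm) h
      exact Or.inr ⟨h, h1, h3, h2⟩
    · obtain ⟨h1, h2, h3⟩ := pmc_key2 G M hPM hcut c d a b hcd hda hab hbc ncd
        (fun hh => nac hh.symm) (fun hh => nbd hh.symm) h
      exact Or.inl ⟨h1, h, h3, h2⟩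
    · obtain ⟨h1, h2, h3⟩ := pmc_key2 G M hPM hcut d a b c hda hab hbc hcd
        (fun hh => nad hh.symm) (fun hh => nbd hh.symm) nac h
      exact Or.inr ⟨h1, h, h2, h3⟩
  constructor
  · rcases P with ⟨p1, p2, p3, p4⟩ | ⟨p1, p2, p3, p4⟩
    · left
      ext e
      simp only [Finset.mem_inter, Finset.mem_insert, Finset.mem_singleton]
      constructor
      · rintro ⟨(rfl | rfl | rfl | rfl), hm⟩
        · exact Or.inl rfl
        · exact absurd hm p3
        · exact Or.inr rfl
        · exact absurd hm p4
      · rintro (rfl | rfl)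
        · exact ⟨Or.inl rfl, p1⟩
        · exact ⟨Or.inr (Or.inr (Or.inl rfl)), p2⟩
    · right
      ext e
      simp only [Finset.mem_inter, Finset.mem_insert, Finset.mem_singleton]
      constructor
      · rintro ⟨(rfl | rfl | rfl | rfl), hm⟩
        · exact absurd hm p3
        · exact Or.inl rfl
        · exact absurd hm p4
        · exact Or.inr rfl
      · rintro (rfl | rfl)
        · exact ⟨Or.inr (Or.inl rfl), p1⟩
        · exact ⟨Or.inr (Or.inr (Or.inr rfl)), p2⟩
  · intro x' w' hx' hw' _hadj'
    simp only [Set.mem_insert_iff, Set.mem_singleton_iff, not_or] at hx' hw'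
    obtain ⟨qa, qb, qc, qd⟩ := hw'
    rcases P with ⟨p1, p2, _, _⟩ | ⟨p1, p2, _, _⟩ <;>
      rcases hx' with h | h | h | h <;> rw [h]
    · exact pmc_noout M hPM a b a w' p1 (Or.inl rfl) qa qb
    · exact pmc_noout M hPM a b b w' p1 (Or.inr rfl) qa qb
    · exact pmc_noout M hPM c d c w' p2 (Or.inl rfl) qc qd
    · exact pmc_noout M hPM c d d w' p2 (Or.inr rfl) qc qd
    · exact pmc_noout M hPM d a a w' p2 (Or.inr rfl) qd qa
    · exact pmc_noout M hPM b c b w' p1 (Or.inl rfl) qb qc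
    · exact pmc_noout M hPM b c c w' p1 (Or.inr rfl) qb qc
    · exact pmc_noout M hPM d a d w' p2 (Or.inl rfl) qd qa

theorem pmc_path_of_four_cycles' {V : Type*} [Fintype V] [DecidableEq V]
    (G : SimpleGraph V) [DecidableRel G.Adj] (M : Finset (Sym2 V))
    (hcubic : ∀ v : V, G.degree v = 3)
    (hM : ∀ e ∈ M, e ∈ G.edgeSet)
    (hPM : ∀ v : V, ∃! e, e ∈ M ∧ v ∈ e)
    (hcut : ∃ A : Set V, ∀ u v : V, G.Adj u v → (s(u, v) ∈ M ↔ ((u ∈ A) ↔ v ∉ A)))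
    (k : ℕ) (hk : 0 < k) (a b c d : ℕ → V)
    (hcyc : ∀ i < k, [a i, b i, c i, d i].Nodup ∧
      G.Adj (a i) (b i) ∧ G.Adj (b i) (c i) ∧ G.Adj (c i) (d i) ∧ G.Adj (d i) (a i) ∧
      ¬ G.Adj (a i) (c i) ∧ ¬ G.Adj (b i) (d i))
    (hdisj : ∀ i < k, ∀ j < k, i ≠ j →
      ∀ x : V, x ∈ ({a i, b i, c i, d i} : Set V) → x ∉ ({a j, b j, c j, d j} : Set V))
    (hjoin : ∀ i, i + 1 < k → ∃ x y : V, x ∈ ({a i, b i, c i, d i} : Set V) ∧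
      y ∈ ({a (i+1), b (i+1), c (i+1), d (i+1)} : Set V) ∧ G.Adj x y)
    (hstart : ∃ x w : V, x ∈ ({a 0, b 0, c 0, d 0} : Set V) ∧
      w ∉ ({a 0, b 0, c 0, d 0} : Set V) ∧ G.Adj x w ∧ s(x, w) ∉ M) :
    ∀ i < k,
      (({s(a i, b i), s(b i, c i), s(c i, d i), s(d i, a i)} : Finset (Sym2 V)) ∩ M
          = ({s(a i, b i), s(c i, d i)} : Finset (Sym2 V)) ∨
        ({s(a i, b i), s(b i, c i), s(c i, d i), s(d i, a i)} : Finset (Sym2 V)) ∩ M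
          = ({s(b i, c i), s(d i, a i)} : Finset (Sym2 V))) ∧
      ∀ x w : V, x ∈ ({a i, b i, c i, d i} : Set V) →
        w ∉ ({a i, b i, c i, d i} : Set V) → G.Adj x w → s(x, w) ∉ M := by
  have S : ∀ i, i < k → ∃ x w : V, x ∈ ({a i, b i, c i, d i} : Set V) ∧
      w ∉ ({a i, b i, c i, d i} : Set V) ∧ G.Adj x w ∧ s(x, w) ∉ M := by
    intro i
    induction i with
    | zero => intro _; exact hstart
    | succ n ih =>
      intro hn
      have hn' : n < k := Nat.lt_of_succ_lt hn
      obtain ⟨x, w, hx, hw, hadj, hnm⟩ := ih hn'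
      obtain ⟨hnd, h1, h2, h3, h4, -, -⟩ := hcyc n hn'
      have Q := pmc_single G M hcubic hM hPM hcut _ _ _ _ hnd h1 h2 h3 h4
        x w hx hw hadj hnm
      obtain ⟨p, q, hp, hq, hpq⟩ := hjoin n hn
      have hq' : q ∉ ({a n, b n, c n, d n} : Set V) :=
        hdisj (n+1) hn n hn' (by omega) q hq
      have hnm' : s(p, q) ∉ M := Q.2 p q hp hq' hpq
      refine ⟨q, p, hq, hdisj n hn' (n+1) hn (by omega) p hp, hpq.symm, ?_⟩
      rwa [Sym2.eq_swap]
  intro i hi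
  obtain ⟨x, w, hx, hw, hadj, hnm⟩ := S i hi
  obtain ⟨hnd, h1, h2, h3, h4, -, -⟩ := hcyc i hi
  exact pmc_single G M hcubic hM hPM hcut _ _ _ _ hnd h1 h2 h3 h4 x w hx hw hadj hnm

/-- along a path of pairwise vertex-disjoint induced 4-cycles
`C₀, …, C_{k-1}` (consecutive cycles joined by an edge), if some outgoing edge of
`C₀` is not in the perfect matching cut `M`, then every `C_i` contains exactly two
opposite edges of `M` and has no outgoing edge in `M`. -/
theorem pmc_path_of_four_cycles {V : Type*} [Fintype V] [DecidableEq V]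
    (G : SimpleGraph V) [DecidableRel G.Adj] (M : Finset (Sym2 V))
    (hcubic : ∀ v : V, G.degree v = 3)
    (hM : ∀ e ∈ M, e ∈ G.edgeSet)
    (hPM : ∀ v : V, ∃! e, e ∈ M ∧ v ∈ e)
    (hcut : ∃ A : Set V, ∀ u v : V, G.Adj u v → (s(u, v) ∈ M ↔ ((u ∈ A) ↔ v ∉ A)))
    (k : ℕ) (hk : 0 < k) (a b c d : ℕ → V)
    (hcyc : ∀ i < k, [a i, b i, c i, d i].Nodup ∧
      G.Adj (a i) (b i) ∧ G.Adj (b i) (c i) ∧ G.Adj (c i) (d i) ∧ G.Adj (d i) (a i) ∧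
      ¬ G.Adj (a i) (c i) ∧ ¬ G.Adj (b i) (d i))
    (hdisj : ∀ i < k, ∀ j < k, i ≠ j →
      ∀ x : V, x ∈ ({a i, b i, c i, d i} : Set V) → x ∉ ({a j, b j, c j, d j} : Set V))
    (hjoin : ∀ i, i + 1 < k → ∃ x y : V, x ∈ ({a i, b i, c i, d i} : Set V) ∧
      y ∈ ({a (i+1), b (i+1), c (i+1), d (i+1)} : Set V) ∧ G.Adj x y)
    (hstart : ∃ x w : V, x ∈ ({a 0, b 0, c 0, d 0} : Set V) ∧
      w ∉ ({a 0, b 0, c 0, d 0} : Set V) ∧ G.Adj x w ∧ s(x, w) ∉ M) :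
    ∀ i < k,
      (({s(a i, b i), s(b i, c i), s(c i, d i), s(d i, a i)} : Finset (Sym2 V)) ∩ M
          = ({s(a i, b i), s(c i, d i)} : Finset (Sym2 V)) ∨
        ({s(a i, b i), s(b i, c i), s(c i, d i), s(d i, a i)} : Finset (Sym2 V)) ∩ M
          = ({s(b i, c i), s(d i, a i)} : Finset (Sym2 V))) ∧
      ∀ x w : V, x ∈ ({a i, b i, c i, d i} : Set V) →
        w ∉ ({a i, b i, c i, d i} : Set V) → G.Adj x w → s(x, w) ∉ M := by
  exact pmc_path_of_four_cycles' G M hcubic hM hPM hcut k hk a b c d hcyc hdisj hjoin hstart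
end

section
/- Let G be a cubic graph, M a perfect matching cut of G with cut (A,B), and C an induced 4-vertex cycle of G. If no edge of C is in M, then all four vertices of C lie on the same side of the cut, and all four neighbors of V(C) outside C lie on the other side. -/
open SimpleGraph

lemma third_edge_in_M {V : Type*} [Fintype V] [DecidableEq V]
    (G : SimpleGraph V) [DecidableRel G.Adj] (M : Finset (Sym2 V))
    (hM : ∀ e ∈ M, e ∈ G.edgeSet)
    (hPM : ∀ v : V, ∃! e, e ∈ M ∧ v ∈ e)
    {x p q w : V} (hdeg : G.degree x = 3)
    (hxp : G.Adj x p) (hxq : G.Adj x q) (hpq : p ≠ q)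
    (hp : s(x, p) ∉ M) (hq : s(x, q) ∉ M)
    (hxw : G.Adj x w) (hwp : w ≠ p) (hwq : w ≠ q) :
    s(x, w) ∈ M := by
  obtain ⟨e, ⟨heM, hxe⟩, _⟩ := hPM x
  have hGe := hM e heM
  -- write e = s(x, y)
  obtain ⟨y, rfl⟩ : ∃ y, e = s(x, y) := by
    induction e using Sym2.ind with
    | _ u v =>
      rcases Sym2.mem_iff.mp hxe with rfl | rfl
      · exact ⟨v, rfl⟩
      · exact ⟨u, Sym2.eq_swap⟩
  have hxy : G.Adj x y := hGe
  have hyp : y ≠ p := fun h => hp (h ▸ heM)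
  have hyq : y ≠ q := fun h => hq (h ▸ heM)
  -- neighbors of x are exactly {p, q, y}
  have hsub : ({p, q, y} : Finset V) ⊆ G.neighborFinset x := by
    intro z hz
    simp only [Finset.mem_insert, Finset.mem_singleton] at hz
    rcases hz with rfl | rfl | rfl <;> simpa [mem_neighborFinset]
  have hcard : ({p, q, y} : Finset V).card = 3 := by
    rw [Finset.card_insert_of_notMem (by simp [hpq, hyp.symm]),
      Finset.card_insert_of_notMem (by simp [hyq.symm])]
    simp
  have heq : ({p, q, y} : Finset V) = G.neighborFinset x :=
    Finset.eq_of_subset_of_card_le hsub (by rw [card_neighborFinset_eq_degree, hdeg, hcard])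
  have hw : w ∈ ({p, q, y} : Finset V) := heq ▸ (by simpa [mem_neighborFinset] using hxw)
  simp only [Finset.mem_insert, Finset.mem_singleton] at hw
  rcases hw with rfl | rfl | rfl
  · exact absurd rfl hwp
  · exact absurd rfl hwq
  · exact heM

/-- in a cubic graph with perfect matching cut `M` and cut `(A, Aᶜ)`,
an induced 4-cycle with no edge in `M` has all four vertices on the same side of the
cut and all outside neighbors on the other side. -/
theorem pmc_four_cycle_sides {V : Type*} [Fintype V] [DecidableEq V]
    (G : SimpleGraph V) [DecidableRel G.Adj] (M : Finset (Sym2 V))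
    (hcubic : ∀ v : V, G.degree v = 3)
    (hM : ∀ e ∈ M, e ∈ G.edgeSet)
    (hPM : ∀ v : V, ∃! e, e ∈ M ∧ v ∈ e)
    (A : Set V)
    (hcut : ∀ u v : V, G.Adj u v → (s(u, v) ∈ M ↔ ((u ∈ A) ↔ v ∉ A)))
    (a b c d : V) (hdist : [a, b, c, d].Nodup)
    (hab : G.Adj a b) (hbc : G.Adj b c) (hcd : G.Adj c d) (hda : G.Adj d a)
    (hac : ¬ G.Adj a c) (hbd : ¬ G.Adj b d)
    (hnone : ∀ e ∈ ({s(a,b), s(b,c), s(c,d), s(d,a)} : Finset (Sym2 V)), e ∉ M) :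
    (∀ x ∈ ({a, b, c, d} : Set V), ∀ y ∈ ({a, b, c, d} : Set V), (x ∈ A ↔ y ∈ A)) ∧
      ∀ x w : V, x ∈ ({a, b, c, d} : Set V) → w ∉ ({a, b, c, d} : Set V) →
        G.Adj x w → ¬(x ∈ A ↔ w ∈ A) := by
  simp only [List.nodup_cons, List.mem_cons, List.not_mem_nil, or_false,
    List.mem_singleton, not_or, List.nodup_nil, and_true, List.nodup_singleton,
    List.mem_singleton] at hdist
  obtain ⟨⟨hab', hac', had'⟩, ⟨hbc', hbd'⟩, hcd'⟩ := hdist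
  have hnab : s(a,b) ∉ M := hnone _ (by simp)
  have hnbc : s(b,c) ∉ M := hnone _ (by simp)
  have hncd : s(c,d) ∉ M := hnone _ (by simp)
  have hnda : s(d,a) ∉ M := hnone _ (by simp)
  have e1 : (a ∈ A) ↔ (b ∈ A) := by
    have := (hcut a b hab).not.mp hnab; tauto
  have e2 : (b ∈ A) ↔ (c ∈ A) := by
    have := (hcut b c hbc).not.mp hnbc; tauto
  have e3 : (c ∈ A) ↔ (d ∈ A) := by
    have := (hcut c d hcd).not.mp hncd; tauto
  constructor
  · have key : ∀ z ∈ ({a, b, c, d} : Set V), ((z ∈ A) ↔ (a ∈ A)) := by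
      intro z hz
      simp only [Set.mem_insert_iff, Set.mem_singleton_iff] at hz
      rcases hz with rfl | rfl | rfl | rfl
      · exact Iff.rfl
      · exact e1.symm
      · exact (e1.trans e2).symm
      · exact ((e1.trans e2).trans e3).symm
    intro x hx y hy
    exact (key x hx).trans (key y hy).symm
  · intro x w hx hw hxw
    simp only [Set.mem_insert_iff, Set.mem_singleton_iff, not_or] at hx hw
    obtain ⟨hwa, hwb, hwc, hwd⟩ := hw
    have key : s(x, w) ∈ M := by
      rcases hx with rfl | rfl | rfl | rfl
      · exact third_edge_in_M G M hM hPM (hcubic x) hab hda.symm hbd'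
          hnab (by rwa [Sym2.eq_swap]) hxw hwb hwd
      · exact third_edge_in_M G M hM hPM (hcubic x) hab.symm hbc hac'
          (by rwa [Sym2.eq_swap]) hnbc hxw hwa hwc
      · exact third_edge_in_M G M hM hPM (hcubic x) hbc.symm hcd hbd'
          (by rwa [Sym2.eq_swap]) hncd hxw hwb hwd
      · exact third_edge_in_M G M hM hPM (hcubic x) hcd.symm hda (Ne.symm hac')
          (by rwa [Sym2.eq_swap]) hnda hxw hwc hwa
    have hxA := (hcut x w hxw).mp key
    intro hiff
    exact iff_not_self (hiff.symm.trans hxA)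
end

section
/- Let G be a cubic graph and M a perfect matching cut of G. Let C be a 6-cycle of G. Then the number of edges of C in M is 0 or 2; if it is 2, then at most two of the six outgoing edges of V(C) belong to M, and if it is 0 then all six outgoing edges of V(C) belong to M. -/
open SimpleGraph

private lemma chain1 (b1 b2 b3 b4 b5 b6 : Prop)
    (h1 : b1 ↔ ¬b2) (h2 : b2 ↔ b3) (h3 : b3 ↔ b4) (h4 : b4 ↔ b5) (h5 : b5 ↔ b6)
    (h6 : b6 ↔ b1) : False := by tauto

private lemma chain3 (b1 b2 b3 b4 b5 b6 : Prop)
    (h1 : b1 ↔ ¬b2) (h2 : b2 ↔ b3) (h3 : b3 ↔ ¬b4) (h4 : b4 ↔ b5) (h5 : b5 ↔ ¬b6)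
    (h6 : b6 ↔ b1) : False := by tauto

private lemma un_iff (a b : Prop) (h : ¬(a ↔ ¬b)) : a ↔ b := by tauto

set_option maxHeartbeats 1600000 in
/-- a 6-cycle of a cubic graph with perfect matching cut `M` has 0 or
2 of its edges in `M`; with 2 edges, at most two of the six outgoing edges are in
`M`; with 0 edges, all six outgoing edges are in `M`. -/
theorem pmc_six_cycle_cases {V : Type*} [Fintype V] [DecidableEq V]
    (G : SimpleGraph V) [DecidableRel G.Adj] (M : Finset (Sym2 V))
    (hcubic : ∀ v : V, G.degree v = 3)
    (hM : ∀ e ∈ M, e ∈ G.edgeSet)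
    (hPM : ∀ v : V, ∃! e, e ∈ M ∧ v ∈ e)
    (hcut : ∃ A : Set V, ∀ u v : V, G.Adj u v → (s(u, v) ∈ M ↔ ((u ∈ A) ↔ v ∉ A)))
    (v₁ v₂ v₃ v₄ v₅ v₆ : V) (hdist : [v₁, v₂, v₃, v₄, v₅, v₆].Nodup)
    (h12 : G.Adj v₁ v₂) (h23 : G.Adj v₂ v₃) (h34 : G.Adj v₃ v₄)
    (h45 : G.Adj v₄ v₅) (h56 : G.Adj v₅ v₆) (h61 : G.Adj v₆ v₁) :
    ((({s(v₁,v₂), s(v₂,v₃), s(v₃,v₄), s(v₄,v₅), s(v₅,v₆), s(v₆,v₁)} : Finset (Sym2 V))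
        ∩ M).card = 0 ∨
      (({s(v₁,v₂), s(v₂,v₃), s(v₃,v₄), s(v₄,v₅), s(v₅,v₆), s(v₆,v₁)} : Finset (Sym2 V))
        ∩ M).card = 2) ∧
    ((({s(v₁,v₂), s(v₂,v₃), s(v₃,v₄), s(v₄,v₅), s(v₅,v₆), s(v₆,v₁)} : Finset (Sym2 V))
        ∩ M).card = 2 →
      (({v₁, v₂, v₃, v₄, v₅, v₆} : Finset V).filter
        (fun x => ∃ w : V, w ∉ ({v₁, v₂, v₃, v₄, v₅, v₆} : Finset V) ∧
          G.Adj x w ∧ s(x, w) ∈ M)).card ≤ 2) ∧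
    ((({s(v₁,v₂), s(v₂,v₃), s(v₃,v₄), s(v₄,v₅), s(v₅,v₆), s(v₆,v₁)} : Finset (Sym2 V))
        ∩ M).card = 0 →
      ∀ x w : V, x ∈ ({v₁, v₂, v₃, v₄, v₅, v₆} : Finset V) →
        w ∉ ({v₁, v₂, v₃, v₄, v₅, v₆} : Finset V) → G.Adj x w → s(x, w) ∈ M) := by
  classical
  simp only [List.nodup_cons, List.mem_cons, List.mem_singleton, List.not_mem_nil,
    or_false, not_or, List.nodup_nil, and_true] at hdist
  obtain ⟨⟨d12, d13, d14, d15, d16⟩, ⟨d23, d24, d25, d26⟩, ⟨d34, d35, d36⟩, ⟨d45, d46⟩, d56, -⟩ := hdist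
  -- uniqueness of matching edge at a vertex
  have key2 : ∀ (x : V) (e f : Sym2 V), e ∈ M → f ∈ M → x ∈ e → x ∈ f → e = f := by
    intro x e f he hf hxe hxf
    obtain ⟨g, _, hu⟩ := hPM x
    rw [hu e ⟨he, hxe⟩, hu f ⟨hf, hxf⟩]
  have key : ∀ x a b : V, a ≠ b → s(x, a) ∈ M → s(x, b) ∈ M → False := by
    intro x a b hab h1 h2
    exact hab (Sym2.congr_right.mp (key2 x _ _ h1 h2 (by simp) (by simp)))
  -- edge distinctness facts (nonadjacent pairs)
  have n13 : s(v₁,v₂) ≠ s(v₃,v₄) := by simp [Sym2.eq_iff]; tauto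
  have n14 : s(v₁,v₂) ≠ s(v₄,v₅) := by simp [Sym2.eq_iff]; tauto
  have n15 : s(v₁,v₂) ≠ s(v₅,v₆) := by simp [Sym2.eq_iff]; tauto
  have n24 : s(v₂,v₃) ≠ s(v₄,v₅) := by simp [Sym2.eq_iff]; tauto
  have n25 : s(v₂,v₃) ≠ s(v₅,v₆) := by simp [Sym2.eq_iff]; tauto
  have n26 : s(v₂,v₃) ≠ s(v₆,v₁) := by simp [Sym2.eq_iff]; tauto
  have n35 : s(v₃,v₄) ≠ s(v₅,v₆) := by simp [Sym2.eq_iff]; tauto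
  have n36 : s(v₃,v₄) ≠ s(v₆,v₁) := by simp [Sym2.eq_iff]; tauto
  have n46 : s(v₄,v₅) ≠ s(v₆,v₁) := by simp [Sym2.eq_iff]; tauto
  -- adjacent pair exclusions
  have a12 : ¬(s(v₁,v₂) ∈ M ∧ s(v₂,v₃) ∈ M) := by
    rintro ⟨h1, h2⟩; exact key v₂ v₁ v₃ d13 (by rwa [Sym2.eq_swap]) h2
  have a23 : ¬(s(v₂,v₃) ∈ M ∧ s(v₃,v₄) ∈ M) := by
    rintro ⟨h1, h2⟩; exact key v₃ v₂ v₄ d24 (by rwa [Sym2.eq_swap]) h2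
  have a34 : ¬(s(v₃,v₄) ∈ M ∧ s(v₄,v₅) ∈ M) := by
    rintro ⟨h1, h2⟩; exact key v₄ v₃ v₅ d35 (by rwa [Sym2.eq_swap]) h2
  have a45 : ¬(s(v₄,v₅) ∈ M ∧ s(v₅,v₆) ∈ M) := by
    rintro ⟨h1, h2⟩; exact key v₅ v₄ v₆ d46 (by rwa [Sym2.eq_swap]) h2
  have a56 : ¬(s(v₅,v₆) ∈ M ∧ s(v₆,v₁) ∈ M) := by
    rintro ⟨h1, h2⟩; exact key v₆ v₅ v₁ (fun h => d15 h.symm) (by rwa [Sym2.eq_swap]) h2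
  have a61 : ¬(s(v₆,v₁) ∈ M ∧ s(v₁,v₂) ∈ M) := by
    rintro ⟨h1, h2⟩; exact key v₁ v₆ v₂ (fun h => d26 h.symm) (by rwa [Sym2.eq_swap]) h2
  obtain ⟨A, hA⟩ := hcut
  have c1 := hA v₁ v₂ h12
  have c2 := hA v₂ v₃ h23
  have c3 := hA v₃ v₄ h34
  have c4 := hA v₄ v₅ h45
  have c5 := hA v₅ v₆ h56
  have c6 := hA v₆ v₁ h61
  have q1 : ∀ x, x ∈ M ∨ x ∉ M := fun x => Classical.em _
  have p1 : ¬(s(v₁,v₂) ∈ M ∧ s(v₂,v₃) ∉ M ∧ s(v₃,v₄) ∉ M ∧ s(v₄,v₅) ∉ M ∧ s(v₅,v₆) ∉ M ∧ s(v₆,v₁) ∉ M) :=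
    fun ⟨h1, h2, h3, h4, h5, h6⟩ => chain1 _ _ _ _ _ _ (c1.mp h1)
      (un_iff _ _ (fun hh => h2 (c2.mpr hh))) (un_iff _ _ (fun hh => h3 (c3.mpr hh)))
      (un_iff _ _ (fun hh => h4 (c4.mpr hh))) (un_iff _ _ (fun hh => h5 (c5.mpr hh)))
      (un_iff _ _ (fun hh => h6 (c6.mpr hh)))
  have p2 : ¬(s(v₁,v₂) ∉ M ∧ s(v₂,v₃) ∈ M ∧ s(v₃,v₄) ∉ M ∧ s(v₄,v₅) ∉ M ∧ s(v₅,v₆) ∉ M ∧ s(v₆,v₁) ∉ M) :=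
    fun ⟨h1, h2, h3, h4, h5, h6⟩ => chain1 _ _ _ _ _ _ (c2.mp h2)
      (un_iff _ _ (fun hh => h3 (c3.mpr hh))) (un_iff _ _ (fun hh => h4 (c4.mpr hh)))
      (un_iff _ _ (fun hh => h5 (c5.mpr hh))) (un_iff _ _ (fun hh => h6 (c6.mpr hh)))
      (un_iff _ _ (fun hh => h1 (c1.mpr hh)))
  have p3 : ¬(s(v₁,v₂) ∉ M ∧ s(v₂,v₃) ∉ M ∧ s(v₃,v₄) ∈ M ∧ s(v₄,v₅) ∉ M ∧ s(v₅,v₆) ∉ M ∧ s(v₆,v₁) ∉ M) :=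
    fun ⟨h1, h2, h3, h4, h5, h6⟩ => chain1 _ _ _ _ _ _ (c3.mp h3)
      (un_iff _ _ (fun hh => h4 (c4.mpr hh))) (un_iff _ _ (fun hh => h5 (c5.mpr hh)))
      (un_iff _ _ (fun hh => h6 (c6.mpr hh))) (un_iff _ _ (fun hh => h1 (c1.mpr hh)))
      (un_iff _ _ (fun hh => h2 (c2.mpr hh)))
  have p4 : ¬(s(v₁,v₂) ∉ M ∧ s(v₂,v₃) ∉ M ∧ s(v₃,v₄) ∉ M ∧ s(v₄,v₅) ∈ M ∧ s(v₅,v₆) ∉ M ∧ s(v₆,v₁) ∉ M) :=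
    fun ⟨h1, h2, h3, h4, h5, h6⟩ => chain1 _ _ _ _ _ _ (c4.mp h4)
      (un_iff _ _ (fun hh => h5 (c5.mpr hh))) (un_iff _ _ (fun hh => h6 (c6.mpr hh)))
      (un_iff _ _ (fun hh => h1 (c1.mpr hh))) (un_iff _ _ (fun hh => h2 (c2.mpr hh)))
      (un_iff _ _ (fun hh => h3 (c3.mpr hh)))
  have p5 : ¬(s(v₁,v₂) ∉ M ∧ s(v₂,v₃) ∉ M ∧ s(v₃,v₄) ∉ M ∧ s(v₄,v₅) ∉ M ∧ s(v₅,v₆) ∈ M ∧ s(v₆,v₁) ∉ M) :=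
    fun ⟨h1, h2, h3, h4, h5, h6⟩ => chain1 _ _ _ _ _ _ (c5.mp h5)
      (un_iff _ _ (fun hh => h6 (c6.mpr hh))) (un_iff _ _ (fun hh => h1 (c1.mpr hh)))
      (un_iff _ _ (fun hh => h2 (c2.mpr hh))) (un_iff _ _ (fun hh => h3 (c3.mpr hh)))
      (un_iff _ _ (fun hh => h4 (c4.mpr hh)))
  have p6 : ¬(s(v₁,v₂) ∉ M ∧ s(v₂,v₃) ∉ M ∧ s(v₃,v₄) ∉ M ∧ s(v₄,v₅) ∉ M ∧ s(v₅,v₆) ∉ M ∧ s(v₆,v₁) ∈ M) :=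
    fun ⟨h1, h2, h3, h4, h5, h6⟩ => chain1 _ _ _ _ _ _ (c6.mp h6)
      (un_iff _ _ (fun hh => h1 (c1.mpr hh))) (un_iff _ _ (fun hh => h2 (c2.mpr hh)))
      (un_iff _ _ (fun hh => h3 (c3.mpr hh))) (un_iff _ _ (fun hh => h4 (c4.mpr hh)))
      (un_iff _ _ (fun hh => h5 (c5.mpr hh)))
  have p7 : ¬(s(v₁,v₂) ∈ M ∧ s(v₂,v₃) ∉ M ∧ s(v₃,v₄) ∈ M ∧ s(v₄,v₅) ∉ M ∧ s(v₅,v₆) ∈ M ∧ s(v₆,v₁) ∉ M) :=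
    fun ⟨h1, h2, h3, h4, h5, h6⟩ => chain3 _ _ _ _ _ _ (c1.mp h1)
      (un_iff _ _ (fun hh => h2 (c2.mpr hh))) (c3.mp h3)
      (un_iff _ _ (fun hh => h4 (c4.mpr hh))) (c5.mp h5)
      (un_iff _ _ (fun hh => h6 (c6.mpr hh)))
  have p8 : ¬(s(v₁,v₂) ∉ M ∧ s(v₂,v₃) ∈ M ∧ s(v₃,v₄) ∉ M ∧ s(v₄,v₅) ∈ M ∧ s(v₅,v₆) ∉ M ∧ s(v₆,v₁) ∈ M) :=
    fun ⟨h1, h2, h3, h4, h5, h6⟩ => chain3 _ _ _ _ _ _ (c2.mp h2)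
      (un_iff _ _ (fun hh => h3 (c3.mpr hh))) (c4.mp h4)
      (un_iff _ _ (fun hh => h5 (c5.mpr hh))) (c6.mp h6)
      (un_iff _ _ (fun hh => h1 (c1.mpr hh)))
  refine ⟨?_, ?_, ?_⟩
  · -- part 1
    by_cases hm1 : s(v₁,v₂) ∈ M <;> by_cases hm2 : s(v₂,v₃) ∈ M <;>
      by_cases hm3 : s(v₃,v₄) ∈ M <;> by_cases hm4 : s(v₄,v₅) ∈ M <;>
      by_cases hm5 : s(v₅,v₆) ∈ M <;> by_cases hm6 : s(v₆,v₁) ∈ M <;>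
    first
      | exact (a12 ⟨hm1, hm2⟩).elim
      | exact (a23 ⟨hm2, hm3⟩).elim
      | exact (a34 ⟨hm3, hm4⟩).elim
      | exact (a45 ⟨hm4, hm5⟩).elim
      | exact (a56 ⟨hm5, hm6⟩).elim
      | exact (a61 ⟨hm6, hm1⟩).elim
      | (left;
         simp [Finset.insert_inter_of_mem, Finset.insert_inter_of_notMem,
           Finset.singleton_inter_of_mem, Finset.singleton_inter_of_notMem,
           hm1, hm2, hm3, hm4, hm5, hm6]
         done)
      | (right;
         simp [Finset.insert_inter_of_mem, Finset.insert_inter_of_notMem,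
           Finset.singleton_inter_of_mem, Finset.singleton_inter_of_notMem,
           Finset.card_insert_of_notMem, hm1, hm2, hm3, hm4, hm5, hm6,
           n13, n14, n15, n24, n25, n26, n35, n36, n46]
         done)
      | exact (p1 ⟨hm1, hm2, hm3, hm4, hm5, hm6⟩).elim
      | exact (p2 ⟨hm1, hm2, hm3, hm4, hm5, hm6⟩).elim
      | exact (p3 ⟨hm1, hm2, hm3, hm4, hm5, hm6⟩).elim
      | exact (p4 ⟨hm1, hm2, hm3, hm4, hm5, hm6⟩).elim
      | exact (p5 ⟨hm1, hm2, hm3, hm4, hm5, hm6⟩).elim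
      | exact (p6 ⟨hm1, hm2, hm3, hm4, hm5, hm6⟩).elim
      | exact (p7 ⟨hm1, hm2, hm3, hm4, hm5, hm6⟩).elim
      | exact (p8 ⟨hm1, hm2, hm3, hm4, hm5, hm6⟩).elim
  · -- part 2
    intro h2
    obtain ⟨e, f, hef, hef2⟩ := Finset.card_eq_two.mp h2
    have heM : e ∈ M := (Finset.mem_inter.mp (by rw [hef2]; simp : e ∈ _ ∩ M)).2
    have hfM : f ∈ M := (Finset.mem_inter.mp (by rw [hef2]; simp : f ∈ _ ∩ M)).2
    have heS : e ∈ ({s(v₁,v₂), s(v₂,v₃), s(v₃,v₄), s(v₄,v₅), s(v₅,v₆), s(v₆,v₁)} : Finset (Sym2 V)) :=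
      (Finset.mem_inter.mp (by rw [hef2]; simp : e ∈ _ ∩ M)).1
    have hfS : f ∈ ({s(v₁,v₂), s(v₂,v₃), s(v₃,v₄), s(v₄,v₅), s(v₅,v₆), s(v₆,v₁)} : Finset (Sym2 V)) :=
      (Finset.mem_inter.mp (by rw [hef2]; simp : f ∈ _ ∩ M)).1
    have hSmem : ∀ g ∈ ({s(v₁,v₂), s(v₂,v₃), s(v₃,v₄), s(v₄,v₅), s(v₅,v₆), s(v₆,v₁)} : Finset (Sym2 V)),
        ∃ a b : V, g = s(a, b) ∧ a ∈ ({v₁, v₂, v₃, v₄, v₅, v₆} : Finset V) ∧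
          b ∈ ({v₁, v₂, v₃, v₄, v₅, v₆} : Finset V) ∧ a ≠ b := by
      intro g hg
      simp only [Finset.mem_insert, Finset.mem_singleton] at hg
      rcases hg with rfl | rfl | rfl | rfl | rfl | rfl
      · exact ⟨v₁, v₂, rfl, by simp, by simp, d12⟩
      · exact ⟨v₂, v₃, rfl, by simp, by simp, d23⟩
      · exact ⟨v₃, v₄, rfl, by simp, by simp, d34⟩
      · exact ⟨v₄, v₅, rfl, by simp, by simp, d45⟩
      · exact ⟨v₅, v₆, rfl, by simp, by simp, d56⟩
      · exact ⟨v₆, v₁, rfl, by simp, by simp, fun h => d16 h.symm⟩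
    obtain ⟨a, b, rfl, haS, hbS, hab⟩ := hSmem e heS
    obtain ⟨c, d, rfl, hcS, hdS, hcd⟩ := hSmem f hfS
    have hac : a ≠ c := fun h => hef (key2 a _ _ heM hfM (by simp) (by simp [h]))
    have had : a ≠ d := fun h => hef (key2 a _ _ heM hfM (by simp) (by simp [h]))
    have hbc : b ≠ c := fun h => hef (key2 b _ _ heM hfM (by simp) (by simp [h]))
    have hbd : b ≠ d := fun h => hef (key2 b _ _ heM hfM (by simp) (by simp [h]))
    have hcov : ({a, b, c, d} : Finset V).card = 4 := by
      rw [Finset.card_insert_of_notMem (by simp [hab, hac, had]),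
        Finset.card_insert_of_notMem (by simp [hbc, hbd]),
        Finset.card_insert_of_notMem (by simp [hcd]), Finset.card_singleton]
    have hcovsub : ({a, b, c, d} : Finset V) ⊆ ({v₁, v₂, v₃, v₄, v₅, v₆} : Finset V) := by
      intro z hz
      simp only [Finset.mem_insert, Finset.mem_singleton] at hz
      rcases hz with rfl | rfl | rfl | rfl <;> assumption
    have hTsub : ({v₁, v₂, v₃, v₄, v₅, v₆} : Finset V).filter
        (fun x => ∃ w : V, w ∉ ({v₁, v₂, v₃, v₄, v₅, v₆} : Finset V) ∧
          G.Adj x w ∧ s(x, w) ∈ M) ⊆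
        ({v₁, v₂, v₃, v₄, v₅, v₆} : Finset V) \ ({a, b, c, d} : Finset V) := by
      intro x hx
      rw [Finset.mem_filter] at hx
      obtain ⟨hx6, w, hw, _, hwM⟩ := hx
      rw [Finset.mem_sdiff]
      refine ⟨hx6, fun hxcov => ?_⟩
      simp only [Finset.mem_insert, Finset.mem_singleton] at hxcov
      have hwout : ∀ y : V, y ∈ ({v₁, v₂, v₃, v₄, v₅, v₆} : Finset V) → s(x, y) ∈ M → False := by
        intro y hy hxy
        exact key x y w (fun h => hw (h ▸ hy)) hxy hwM
      rcases hxcov with rfl | rfl | rfl | rfl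
      · exact hwout b hbS heM
      · exact hwout a haS (by rwa [Sym2.eq_swap])
      · exact hwout d hdS hfM
      · exact hwout c hcS (by rwa [Sym2.eq_swap])
    calc _ ≤ (({v₁, v₂, v₃, v₄, v₅, v₆} : Finset V) \ ({a, b, c, d} : Finset V)).card :=
          Finset.card_le_card hTsub
      _ ≤ ({v₁, v₂, v₃, v₄, v₅, v₆} : Finset V).card - 4 := by
          rw [Finset.card_sdiff_of_subset hcovsub, hcov]
      _ ≤ 2 := by
          have h6 : ({v₁, v₂, v₃, v₄, v₅, v₆} : Finset V).card ≤ 6 := by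
            refine le_trans (Finset.card_insert_le _ _) (Nat.succ_le_succ ?_)
            refine le_trans (Finset.card_insert_le _ _) (Nat.succ_le_succ ?_)
            refine le_trans (Finset.card_insert_le _ _) (Nat.succ_le_succ ?_)
            refine le_trans (Finset.card_insert_le _ _) (Nat.succ_le_succ ?_)
            refine le_trans (Finset.card_insert_le _ _) (Nat.succ_le_succ ?_)
            simp
          omega
  · -- part 3
    intro h0 x w hx hw hxw
    have hempty : ({s(v₁,v₂), s(v₂,v₃), s(v₃,v₄), s(v₄,v₅), s(v₅,v₆), s(v₆,v₁)} : Finset (Sym2 V))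
        ∩ M = ∅ := Finset.card_eq_zero.mp h0
    have hnot : ∀ g ∈ ({s(v₁,v₂), s(v₂,v₃), s(v₃,v₄), s(v₄,v₅), s(v₅,v₆), s(v₆,v₁)} : Finset (Sym2 V)),
        g ∉ M := by
      intro g hg hgM
      have : g ∈ (∅ : Finset (Sym2 V)) := hempty ▸ Finset.mem_inter.mpr ⟨hg, hgM⟩
      simp at this
    have hn1 : s(v₁,v₂) ∉ M := hnot _ (by simp)
    have hn2 : s(v₂,v₃) ∉ M := hnot _ (by simp)
    have hn3 : s(v₃,v₄) ∉ M := hnot _ (by simp)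
    have hn4 : s(v₄,v₅) ∉ M := hnot _ (by simp)
    have hn5 : s(v₅,v₆) ∉ M := hnot _ (by simp)
    have hn6 : s(v₆,v₁) ∉ M := hnot _ (by simp)
    have e12 : (v₁ ∈ A ↔ v₂ ∈ A) := un_iff _ _ (fun hh => hn1 (c1.mpr hh))
    have e23 : (v₂ ∈ A ↔ v₃ ∈ A) := un_iff _ _ (fun hh => hn2 (c2.mpr hh))
    have e34 : (v₃ ∈ A ↔ v₄ ∈ A) := un_iff _ _ (fun hh => hn3 (c3.mpr hh))
    have e45 : (v₄ ∈ A ↔ v₅ ∈ A) := un_iff _ _ (fun hh => hn4 (c4.mpr hh))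
    have e56 : (v₅ ∈ A ↔ v₆ ∈ A) := un_iff _ _ (fun hh => hn5 (c5.mpr hh))
    have hsame : ∀ z : V, z ∈ ({v₁, v₂, v₃, v₄, v₅, v₆} : Finset V) → (z ∈ A ↔ v₁ ∈ A) := by
      intro z hz
      simp only [Finset.mem_insert, Finset.mem_singleton] at hz
      rcases hz with rfl | rfl | rfl | rfl | rfl | rfl
      · exact Iff.rfl
      · exact e12.symm
      · exact (e23.symm).trans e12.symm
      · exact (e34.symm).trans ((e23.symm).trans e12.symm)
      · exact (e45.symm).trans ((e34.symm).trans ((e23.symm).trans e12.symm))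
      · exact (e56.symm).trans ((e45.symm).trans ((e34.symm).trans ((e23.symm).trans e12.symm)))
    obtain ⟨e, ⟨heM, hxe⟩, -⟩ := hPM x
    obtain ⟨y, rfl⟩ := Sym2.mem_iff_exists.mp hxe
    have hxy : G.Adj x y := (SimpleGraph.mem_edgeSet G).mp (hM _ heM)
    have hyout : y ∉ ({v₁, v₂, v₃, v₄, v₅, v₆} : Finset V) := by
      intro hy
      have hcross := (hA x y hxy).mp heM
      have h1 := hsame x hx
      have h2 := hsame y hy
      exact iff_not_self ((h1.symm.trans hcross).trans (not_congr h2))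
    have hdeg : ∀ p q : V, G.Adj x p → G.Adj x q →
        p ∈ ({v₁, v₂, v₃, v₄, v₅, v₆} : Finset V) →
        q ∈ ({v₁, v₂, v₃, v₄, v₅, v₆} : Finset V) → p ≠ q → w = y := by
      intro p q hp hq hpS hqS hpq
      by_contra hne
      have hsub : ({p, q, w, y} : Finset V) ⊆ G.neighborFinset x := by
        intro z hz
        rw [SimpleGraph.mem_neighborFinset]
        simp only [Finset.mem_insert, Finset.mem_singleton] at hz
        rcases hz with rfl | rfl | rfl | rfl <;> assumption
      have hwp : w ≠ p := fun h => hw (h ▸ hpS)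
      have hwq : w ≠ q := fun h => hw (h ▸ hqS)
      have hyp : y ≠ p := fun h => hyout (h ▸ hpS)
      have hyq : y ≠ q := fun h => hyout (h ▸ hqS)
      have hcard : ({p, q, w, y} : Finset V).card = 4 := by
        rw [Finset.card_insert_of_notMem (by simp [hpq, hwp.symm, hyp.symm]),
          Finset.card_insert_of_notMem (by simp [hwq.symm, hyq.symm]),
          Finset.card_insert_of_notMem (by simp [hne]), Finset.card_singleton]
      have hle := Finset.card_le_card hsub
      rw [hcard, SimpleGraph.card_neighborFinset_eq_degree, hcubic x] at hle
      omega
    have hwy : w = y := by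
      simp only [Finset.mem_insert, Finset.mem_singleton] at hx
      rcases hx with rfl | rfl | rfl | rfl | rfl | rfl
      · exact hdeg v₂ v₆ h12 h61.symm (by simp) (by simp) d26
      · exact hdeg v₁ v₃ h12.symm h23 (by simp) (by simp) d13
      · exact hdeg v₂ v₄ h23.symm h34 (by simp) (by simp) d24
      · exact hdeg v₃ v₅ h34.symm h45 (by simp) (by simp) d35
      · exact hdeg v₄ v₆ h45.symm h56 (by simp) (by simp) d46
      · exact hdeg v₅ v₁ h56.symm h61 (by simp) (by simp) (fun h => d15 h.symm)
    rw [hwy]; exact heM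
end
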